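/- arXiv:2404.00580 — 10 statements merged into one kernel-verified Lean document; each statement's English description precedes it below -/
import Mathlib

section
/- Let X and Y be topological spaces, D_X ⊆ X and D_Y ⊆ Y closed discrete subsets, and φ : Y → X an injection such that φ[Y \ D_Y] = D_X and φ[Y] is dense in X. If D is a closed discrete subset of X and φ⁻¹[D] is an F_σ subset of Y, then D is an F_σ subset of the space ⟨X, σ(τ_X, τ_Y, φ)⟩. -/
open Set Topology

/-- The topology σ(τ_X, τ_Y, φ): open sets of X whose φ-preimage is open in Y. -/
def sigmaTop {X : Type*} {Y : Type*} (tX : TopologicalSpace X) (tY : TopologicalSpace Y)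
    (φ : Y → X) : TopologicalSpace X where
  IsOpen U := tX.IsOpen U ∧ tY.IsOpen (φ ⁻¹' U)
  isOpen_univ := ⟨tX.isOpen_univ, by simpa using tY.isOpen_univ⟩
  isOpen_inter U V hU hV :=
    ⟨tX.isOpen_inter U V hU.1 hV.1, by
      rw [Set.preimage_inter]
      exact tY.isOpen_inter _ _ hU.2 hV.2⟩
  isOpen_sUnion s hs :=
    ⟨tX.isOpen_sUnion s fun U hU => (hs U hU).1, by
      rw [Set.preimage_sUnion]
      exact @isOpen_biUnion _ _ tY _ _ fun U hU => (hs U hU).2⟩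

/-- A set is closed discrete: closed, and its subspace topology is discrete. -/
def ClosedDiscrete {X : Type*} (t : TopologicalSpace X) (D : Set X) : Prop :=
  @IsClosed X t D ∧ @DiscreteTopology D (TopologicalSpace.induced (Subtype.val : D → X) t)

/-- A set is F_σ: a countable union of closed sets. -/
def IsFsigma {X : Type*} (t : TopologicalSpace X) (s : Set X) : Prop :=
  ∃ F : ℕ → Set X, (∀ n, @IsClosed X t (F n)) ∧ s = ⋃ n, F n

theorem ClosedDiscrete.isClosed_of_subset {X : Type*} {t : TopologicalSpace X} {D S : Set X}
    (hD : ClosedDiscrete t D) (hS : S ⊆ D) : IsClosed[t] S := by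
  let _ := t
  obtain ⟨hDc, hdisc⟩ := hD
  have : DiscreteTopology D := hdisc
  rw [← inter_eq_right.mpr hS, ← Subtype.image_preimage_coe]
  exact hDc.isClosedEmbedding_subtypeVal.isClosedMap _ (isClosed_discrete _)

theorem isClosed_sigmaTop {X Y : Type*} {tX : TopologicalSpace X} {tY : TopologicalSpace Y}
    {φ : Y → X} {F : Set X} (hF : IsClosed[tX] F) (hpre : IsClosed[tY] (φ ⁻¹' F)) :
    IsClosed[sigmaTop tX tY φ] F :=
  @IsClosed.mk X (sigmaTop tX tY φ) F ⟨hF.isOpen_compl, hpre.isOpen_compl⟩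

theorem preimage_diff_range_union_image {X Y : Type*} {φ : Y → X}
    (hinj : Function.Injective φ) (S : Set X) (G : Set Y) :
    φ ⁻¹' ((S \ range φ) ∪ φ '' G) = G := by
  rw [preimage_union, preimage_sdiff, preimage_range, sdiff_univ, empty_union,
    hinj.preimage_image]

theorem statement2_general {X Y : Type*} (tX : TopologicalSpace X) (tY : TopologicalSpace Y)
    (φ : Y → X)
    (hinj : Function.Injective φ)
    (D : Set X) (hD : ClosedDiscrete tX D)
    (hpre : IsFsigma tY (φ ⁻¹' D)) :
    IsFsigma (sigmaTop tX tY φ) D := by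
  obtain ⟨G, hGc, hGu⟩ := hpre
  -- Every subset of `D` is closed in `X`, so only the preimages of the pieces need checking;
  -- the points of `D` outside the range of `φ` go into every piece.
  refine ⟨fun n => (D \ range φ) ∪ φ '' G n, fun n => isClosed_sigmaTop ?_ ?_, ?_⟩
  · refine hD.isClosed_of_subset (union_subset sdiff_subset ?_)
    exact image_subset_iff.mpr (hGu ▸ subset_iUnion G n)
  · rw [preimage_diff_range_union_image hinj]
    exact hGc n
  · rw [← union_iUnion, ← image_iUnion, ← hGu, image_preimage_eq_inter_range, sdiff_union_inter]

theorem statement2 {X Y : Type*} (tX : TopologicalSpace X) (tY : TopologicalSpace Y)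
    (DX : Set X) (DY : Set Y) (φ : Y → X)
    (hDX : ClosedDiscrete tX DX) (hDY : ClosedDiscrete tY DY)
    (hinj : Function.Injective φ)
    (himg : φ '' DYᶜ = DX)
    (hdense : @Dense X tX (Set.range φ))
    (D : Set X) (hD : ClosedDiscrete tX D)
    (hpre : IsFsigma tY (φ ⁻¹' D)) :
    IsFsigma (sigmaTop tX tY φ) D :=
  statement2_general tX tY φ hinj D hD hpre
end

section
/- Let X and Y be topological spaces, D_X ⊆ X and D_Y ⊆ Y closed discrete subsets, and φ : Y → X an injection such that φ[Y \ D_Y] = D_X and φ[Y] is dense in X. If D is a closed discrete subset of X and φ⁻¹[D] = ⋃_{α ∈ A} F_α, where {F_α : α ∈ A} is a discrete family of closed subsets of Y, then {φ[F_α] : α ∈ A} is a discrete family of closed subsets of the space ⟨X, σ(τ_X, τ_Y, φ)⟩. -/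
open Set Topology

/-- A family of sets is discrete: every point has a neighborhood meeting
at most one member of the family. -/
def DiscreteFamily {X : Type*} {A : Type*} (t : TopologicalSpace X) (F : A → Set X) : Prop :=
  ∀ x : X, ∃ U, t.IsOpen U ∧ x ∈ U ∧ {α | (F α ∩ U).Nonempty}.Subsingleton

/-- Any subset of a closed discrete set is closed. -/
lemma subset_of_closedDiscrete_isClosed {X : Type*} (tX : TopologicalSpace X) {D : Set X}
    (hD : ClosedDiscrete tX D) {S : Set X} (hS : S ⊆ D) : @IsClosed X tX S := by
  letI := tX
  haveI : DiscreteTopology D := hD.2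
  apply isClosed_of_closure_subset
  intro z hz
  have hzD : z ∈ D := hD.1.closure_eq ▸ closure_mono hS hz
  have hopen : IsOpen ({⟨z, hzD⟩} : Set D) := isOpen_discrete _
  obtain ⟨V, hVopen, hVeq⟩ := isOpen_induced_iff.mp hopen
  have hzV : z ∈ V := by
    have : (⟨z, hzD⟩ : D) ∈ Subtype.val ⁻¹' V := by rw [hVeq]; exact rfl
    exact this
  obtain ⟨w, hwV, hwS⟩ := mem_closure_iff.mp hz V hVopen hzV
  have : (⟨w, hS hwS⟩ : D) ∈ Subtype.val ⁻¹' V := hwV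
  rw [hVeq, mem_singleton_iff, Subtype.ext_iff] at this
  have hwz : w = z := this
  exact hwz ▸ hwS

/-- The union of a discrete family of closed sets is closed. -/
lemma discreteFamily_iUnion_closed {Y A : Type*} (tY : TopologicalSpace Y) (F : A → Set Y)
    (hFcl : ∀ α, @IsClosed Y tY (F α)) (hFdisc : DiscreteFamily tY F) :
    @IsClosed Y tY (⋃ α, F α) := by
  letI := tY
  rw [← isOpen_compl_iff, isOpen_iff_forall_mem_open]
  intro z hz
  obtain ⟨W, hWopen', hzW, hsub⟩ := hFdisc z
  have hWopen : IsOpen W := hWopen'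
  by_cases h : ∃ β, (F β ∩ W).Nonempty
  · obtain ⟨β, hβ⟩ := h
    refine ⟨W ∩ (F β)ᶜ, ?_, hWopen.inter (hFcl β).isOpen_compl,
      ⟨hzW, fun hc => hz (mem_iUnion.mpr ⟨β, hc⟩)⟩⟩
    rintro w ⟨hwW, hwβ⟩
    simp only [mem_compl_iff, mem_iUnion, not_exists]
    intro α hwα
    exact hwβ ((hsub ⟨w, hwα, hwW⟩ hβ : α = β) ▸ hwα)
  · refine ⟨W, fun w hw => ?_, hWopen, hzW⟩
    simp only [mem_compl_iff, mem_iUnion, not_exists]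
    intro α hwα
    exact h ⟨α, w, hwα, hw⟩

theorem statement3 {X Y : Type*} (tX : TopologicalSpace X) (tY : TopologicalSpace Y)
    (DX : Set X) (DY : Set Y) (φ : Y → X)
    (hDX : ClosedDiscrete tX DX) (hDY : ClosedDiscrete tY DY)
    (hinj : Function.Injective φ)
    (himg : φ '' DYᶜ = DX)
    (hdense : @Dense X tX (Set.range φ))
    (D : Set X) (hD : ClosedDiscrete tX D)
    {A : Type*} (F : A → Set Y) (hFcl : ∀ α, @IsClosed Y tY (F α))
    (hFdisc : DiscreteFamily tY F)
    (hcover : φ ⁻¹' D = ⋃ α, F α) :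
    (∀ α, @IsClosed X (sigmaTop tX tY φ) (φ '' F α)) ∧
      DiscreteFamily (sigmaTop tX tY φ) (fun α => φ '' F α) := by
  have hUcl : @IsClosed Y tY (⋃ α, F α) := discreteFamily_iUnion_closed tY F hFcl hFdisc
  have himgD : ∀ S : Set Y, S ⊆ (⋃ α, F α) → φ '' S ⊆ D := by
    rintro S hS x ⟨y, hyS, rfl⟩
    have : y ∈ φ ⁻¹' D := hcover ▸ hS hyS
    exact this
  constructor
  · intro α
    have h1 : @IsClosed X tX (φ '' F α) :=
      subset_of_closedDiscrete_isClosed tX hD (himgD _ (subset_iUnion F α))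
    have hpre : tY.IsOpen (φ ⁻¹' (φ '' F α)ᶜ) := by
      rw [preimage_compl, hinj.preimage_image]
      exact (hFcl α).isOpen_compl
    have hσ : (sigmaTop tX tY φ).IsOpen (φ '' F α)ᶜ := ⟨h1.isOpen_compl, hpre⟩
    exact @IsClosed.mk X (sigmaTop tX tY φ) _ hσ
  · intro x
    by_cases hx : x ∈ range φ
    · obtain ⟨y, rfl⟩ := hx
      obtain ⟨W, hWopen, hyW, hsub⟩ := hFdisc y
      have hWopen' : @IsOpen Y tY W := hWopen
      have hpre : tY.IsOpen (φ ⁻¹' (φ '' ((⋃ α, F α) ∩ Wᶜ))ᶜ) := by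
        letI := tY
        rw [preimage_compl, hinj.preimage_image]
        exact (hUcl.inter hWopen'.isClosed_compl).isOpen_compl
      refine ⟨(φ '' ((⋃ α, F α) ∩ Wᶜ))ᶜ, ?_, ?_, ?_⟩
      · exact ⟨(subset_of_closedDiscrete_isClosed tX hD
            (himgD _ inter_subset_left)).isOpen_compl, hpre⟩
      · rintro ⟨y', hy', heq⟩
        exact hy'.2 (hinj heq ▸ hyW)
      · have key : ∀ a, ((fun α => φ '' F α) a ∩ (φ '' ((⋃ α, F α) ∩ Wᶜ))ᶜ).Nonempty →
            (F a ∩ W).Nonempty := by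
          rintro a ⟨z, ⟨w, hwFa, rfl⟩, hz2⟩
          refine ⟨w, hwFa, ?_⟩
          by_contra hwW
          exact hz2 ⟨w, ⟨mem_iUnion.mpr ⟨a, hwFa⟩, hwW⟩, rfl⟩
        exact fun a ha b hb => hsub (key a ha) (key b hb)
    · refine ⟨(φ '' (⋃ α, F α))ᶜ, ?_, fun hc => hx (image_subset_range _ _ hc), ?_⟩
      · refine ⟨(subset_of_closedDiscrete_isClosed tX hD (himgD _ subset_rfl)).isOpen_compl, ?_⟩
        rw [preimage_compl, hinj.preimage_image]
        exact hUcl.isOpen_compl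
      · rintro a ⟨z, ⟨w, hwFa, rfl⟩, hz2⟩ b hb
        exact absurd ⟨w, mem_iUnion.mpr ⟨a, hwFa⟩, rfl⟩ hz2
end

section
/- Let X and Y be topological spaces, D_X ⊆ X and D_Y ⊆ Y closed discrete subsets, and φ : Y → X an injection such that φ[Y \ D_Y] = D_X and φ[Y] is dense in X. If D is a closed discrete subset of X and φ⁻¹[D] = ⋃_{α ∈ A} F_α, where {F_α : α ∈ A} is a σ-discrete family of closed subsets of Y, then {φ[F_α] : α ∈ A} is a σ-discrete family of closed subsets of the space ⟨X, σ(τ_X, τ_Y, φ)⟩. -/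
open Set Topology

/-- A family of sets is σ-discrete: a countable union of discrete subfamilies. -/
def SigmaDiscreteFamily {X : Type*} {A : Type*} (t : TopologicalSpace X) (F : A → Set X) : Prop :=
  ∃ c : A → ℕ, ∀ n : ℕ, DiscreteFamily t (fun α : {a : A // c a = n} => F α.1)


lemma aux_subset_closed {X : Type*} [t : TopologicalSpace X] {D S : Set X}
    (hD : ClosedDiscrete t D) (hS : S ⊆ D) : IsClosed S := by
  haveI : DiscreteTopology D := hD.2
  have h1 : IsClosed (Subtype.val ⁻¹' S : Set D) := isClosed_discrete _
  have h2 := hD.1.isClosedEmbedding_subtypeVal.isClosedMap _ h1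
  have : Subtype.val '' (Subtype.val ⁻¹' S : Set D) = S := by
    rw [Subtype.image_preimage_coe]
    exact inter_eq_right.mpr hS
  rwa [this] at h2

lemma aux_union_closed {Y : Type*} [t : TopologicalSpace Y] {A : Type*} {F : A → Set Y}
    (hcl : ∀ α, IsClosed (F α)) (hd : DiscreteFamily t F) : IsClosed (⋃ α, F α) := by
  rw [← isOpen_compl_iff, isOpen_iff_mem_nhds]
  intro y hy
  obtain ⟨V, hVopen0, hyV, hVsub⟩ := hd y
  have hVopen : IsOpen V := hVopen0
  by_cases h : ∃ α, (F α ∩ V).Nonempty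
  · obtain ⟨α₀, hα₀⟩ := h
    have hmem : y ∈ V ∩ (F α₀)ᶜ := ⟨hyV, fun hyF => hy (mem_iUnion.mpr ⟨α₀, hyF⟩)⟩
    refine Filter.mem_of_superset ((hVopen.inter (hcl α₀).isOpen_compl).mem_nhds hmem) ?_
    intro z hz hzU
    obtain ⟨α, hzα⟩ := mem_iUnion.mp hzU
    have : α = α₀ := hVsub ⟨z, hzα, hz.1⟩ hα₀
    exact hz.2 (this ▸ hzα)
  · refine Filter.mem_of_superset (hVopen.mem_nhds hyV) ?_
    intro z hz hzU
    obtain ⟨α, hzα⟩ := mem_iUnion.mp hzU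
    exact h ⟨α, z, hzα, hz⟩

theorem statement4 {X Y : Type*} (tX : TopologicalSpace X) (tY : TopologicalSpace Y)
    (DX : Set X) (DY : Set Y) (φ : Y → X)
    (hDX : ClosedDiscrete tX DX) (hDY : ClosedDiscrete tY DY)
    (hinj : Function.Injective φ)
    (himg : φ '' DYᶜ = DX)
    (hdense : @Dense X tX (Set.range φ))
    (D : Set X) (hD : ClosedDiscrete tX D)
    {A : Type*} (F : A → Set Y) (hFcl : ∀ α, @IsClosed Y tY (F α))
    (hFdisc : SigmaDiscreteFamily tY F)
    (hcover : φ ⁻¹' D = ⋃ α, F α) :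
    (∀ α, @IsClosed X (sigmaTop tX tY φ) (φ '' F α)) ∧
      SigmaDiscreteFamily (sigmaTop tX tY φ) (fun α => φ '' F α) := by
  have hsub : ∀ α, F α ⊆ φ ⁻¹' D := fun α => hcover ▸ subset_iUnion F α
  -- key: for tY-closed S ⊆ φ⁻¹D, φ''S is σ-closed
  have key : ∀ S : Set Y, @IsClosed Y tY S → S ⊆ φ ⁻¹' D →
      @IsClosed X (sigmaTop tX tY φ) (φ '' S) := by
    intro S hS hSD
    rw [← @isOpen_compl_iff X _ (sigmaTop tX tY φ)]
    show (sigmaTop tX tY φ).IsOpen (φ '' S)ᶜ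
    refine ⟨?_, ?_⟩
    · have h1 : φ '' S ⊆ D := by
        rintro _ ⟨y, hy, rfl⟩; exact hSD hy
      have h2 : @IsClosed X tX (φ '' S) := aux_subset_closed hD h1
      exact h2.isOpen_compl
    · have : φ ⁻¹' (φ '' S)ᶜ = Sᶜ := by
        rw [preimage_compl, hinj.preimage_image]
      rw [this]
      exact hS.isOpen_compl
  refine ⟨fun α => key (F α) (hFcl α) (hsub α), ?_⟩
  obtain ⟨c, hc⟩ := hFdisc
  refine ⟨c, fun n x => ?_⟩
  set T : Set Y := ⋃ α : {a : A // c a = n}, F α.1 with hT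
  have hTcl : @IsClosed Y tY T := aux_union_closed (fun α => hFcl α.1) (hc n)
  have hTsub : T ⊆ φ ⁻¹' D := iUnion_subset fun α => hsub α.1
  by_cases hx : x ∈ Set.range φ
  · obtain ⟨y, rfl⟩ := hx
    obtain ⟨V, hVopen, hyV, hVsub⟩ := hc n y
    have hVopen' : @IsOpen Y tY V := hVopen
    have hScl : @IsClosed Y tY (T \ V) := hTcl.sdiff hVopen'
    have hSsub : T \ V ⊆ φ ⁻¹' D := fun z hz => hTsub hz.1
    refine ⟨(φ '' (T \ V))ᶜ, (key _ hScl hSsub).isOpen_compl, ?_, ?_⟩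
    · rintro ⟨z, hz, hzeq⟩
      exact (hinj hzeq ▸ hz).2 hyV
    · intro α hα β hβ
      refine hVsub ?_ ?_
      · obtain ⟨_, ⟨w, hw, rfl⟩, hwc⟩ := hα
        have hwV : w ∈ V := by
          by_contra hwV
          exact hwc ⟨w, ⟨mem_iUnion.mpr ⟨α, hw⟩, hwV⟩, rfl⟩
        exact ⟨w, hw, hwV⟩
      · obtain ⟨_, ⟨w, hw, rfl⟩, hwc⟩ := hβ
        have hwV : w ∈ V := by
          by_contra hwV
          exact hwc ⟨w, ⟨mem_iUnion.mpr ⟨β, hw⟩, hwV⟩, rfl⟩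
        exact ⟨w, hw, hwV⟩
  · refine ⟨(φ '' T)ᶜ, (key _ hTcl hTsub).isOpen_compl, ?_, ?_⟩
    · exact fun h => hx (image_subset_range φ T h)
    · intro α hα
      obtain ⟨_, ⟨w, hw, rfl⟩, hwc⟩ := hα
      exact absurd ⟨w, mem_iUnion.mpr ⟨α, hw⟩, rfl⟩ hwc
end

section
/- Let X and Y be topological spaces, D_X ⊆ X and D_Y ⊆ Y closed discrete subsets, and φ : Y → X an injection such that φ[Y \ D_Y] = D_X and φ[Y] is dense in X. If D is a closed discrete subset of X and φ⁻¹[D] is a closed discrete subset of Y, then D is a closed discrete subset of the space ⟨X, σ(τ_X, τ_Y, φ)⟩. -/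
open Set Topology

/-
The closed discrete sets are exactly the sets all of whose subsets are closed. For σ(τ_X, τ_Y, φ)
a set is closed iff it is closed in X and its φ-preimage is closed in Y, so every subset S of D
is σ-closed: S ⊆ D is closed in X, and φ⁻¹[S] ⊆ φ⁻¹[D] is closed in Y.
-/

theorem closedDiscrete_iff_forall_subset_isClosed {X : Type*} (t : TopologicalSpace X)
    (D : Set X) : ClosedDiscrete t D ↔ ∀ S ⊆ D, IsClosed[t] S := by
  let := t
  constructor
  · rintro ⟨hD, hdisc⟩ S hS
    rw [← inter_eq_right.2 hS, ← Subtype.image_preimage_coe]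
    exact (discreteTopology_iff_forall_isClosed.1 hdisc _).trans hD
  · intro h
    refine ⟨h D subset_rfl, discreteTopology_iff_forall_isClosed.2 fun T => ?_⟩
    rw [← Subtype.val_injective.preimage_image T]
    exact (h _ (Subtype.coe_image_subset D T)).preimage continuous_subtype_val

theorem isClosed_sigmaTop_iff {X Y : Type*} (tX : TopologicalSpace X) (tY : TopologicalSpace Y)
    (φ : Y → X) (S : Set X) :
    IsClosed[sigmaTop tX tY φ] S ↔ IsClosed[tX] S ∧ IsClosed[tY] (φ ⁻¹' S) := by
  simp only [← isOpen_compl_iff, ← preimage_compl]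
  rfl

theorem statement5_general {X Y : Type*} (tX : TopologicalSpace X) (tY : TopologicalSpace Y)
    (φ : Y → X)
    (D : Set X) (hD : ClosedDiscrete tX D)
    (hpre : ClosedDiscrete tY (φ ⁻¹' D)) :
    ClosedDiscrete (sigmaTop tX tY φ) D := by
  rw [closedDiscrete_iff_forall_subset_isClosed] at hD hpre ⊢
  exact fun S hS => (isClosed_sigmaTop_iff tX tY φ S).2
    ⟨hD S hS, hpre (φ ⁻¹' S) (preimage_mono hS)⟩

theorem statement5 {X Y : Type*} (tX : TopologicalSpace X) (tY : TopologicalSpace Y)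
    (DX : Set X) (DY : Set Y) (φ : Y → X)
    (hDX : ClosedDiscrete tX DX) (hDY : ClosedDiscrete tY DY)
    (hinj : Function.Injective φ)
    (himg : φ '' DYᶜ = DX)
    (hdense : @Dense X tX (Set.range φ))
    (D : Set X) (hD : ClosedDiscrete tX D)
    (hpre : ClosedDiscrete tY (φ ⁻¹' D)) :
    ClosedDiscrete (sigmaTop tX tY φ) D :=
  statement5_general tX tY φ D hD hpre
end

section
/- Let X and Y be topological spaces, D_X ⊆ X and D_Y ⊆ Y closed discrete subsets, and φ : Y → X an injection such that φ[Y \ D_Y] = D_X and φ[Y] is dense in X. If X and Y are collectionwise normal, then the space ⟨X, σ(τ_X, τ_Y, φ)⟩ is collectionwise normal. -/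
open Set Topology

universe u v

/-- A space is collectionwise normal: normal, and every discrete family of pairwise
disjoint closed sets can be separated by a pairwise disjoint family of open sets. -/
def CollectionwiseNormal {X : Type u} (t : TopologicalSpace X) : Prop :=
  @NormalSpace X t ∧
    ∀ {A : Type u} (F : A → Set X), DiscreteFamily t F → (∀ α, @IsClosed X t (F α)) →
      Pairwise (Function.onFun Disjoint F) →
      ∃ U : A → Set X, (∀ α, t.IsOpen (U α)) ∧ Pairwise (Function.onFun Disjoint U) ∧
        ∀ α, F α ⊆ U α


section Helpers

variable {Z : Type*} [TopologicalSpace Z]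

lemma helper_isolated {D : Set Z} (hdisc : DiscreteTopology D) {d : Z} (hd : d ∈ D) :
    ∃ U : Set Z, IsOpen U ∧ U ∩ D = {d} := by
  have h1 : IsOpen ({⟨d, hd⟩} : Set D) := isOpen_discrete _
  obtain ⟨U, hU, hUval⟩ := isOpen_induced_iff.mp h1
  refine ⟨U, hU, ?_⟩
  have hdU : d ∈ U := by
    have : (⟨d, hd⟩ : D) ∈ (Subtype.val : D → Z) ⁻¹' U := by rw [hUval]; rfl
    exact this
  ext x
  constructor
  · rintro ⟨hxU, hxD⟩
    have : (⟨x, hxD⟩ : D) ∈ (Subtype.val : D → Z) ⁻¹' U := hxU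
    rw [hUval] at this
    exact congrArg Subtype.val this
  · intro hx
    rw [mem_singleton_iff] at hx
    exact hx ▸ ⟨hdU, hd⟩

lemma helper_subset_closed {D S : Set Z} (hcl : IsClosed D) (hdisc : DiscreteTopology D)
    (hS : S ⊆ D) : IsClosed S := by
  rw [← isOpen_compl_iff, isOpen_iff_forall_mem_open]
  intro x hx
  by_cases hxD : x ∈ D
  · obtain ⟨U, hU, hUD⟩ := helper_isolated hdisc hxD
    refine ⟨U, ?_, hU, ?_⟩
    · intro z hz hzS
      have : z ∈ U ∩ D := ⟨hz, hS hzS⟩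
      rw [hUD] at this
      exact hx (this ▸ hzS)
    · have : x ∈ U ∩ D := by rw [hUD]; rfl
      exact this.1
  · exact ⟨Dᶜ, fun z hz hzS => hz (hS hzS), hcl.isOpen_compl, hxD⟩

lemma helper_biUnion_closed {ι : Type*} {F : ι → Set Z}
    (hd : ∀ x, ∃ U, IsOpen U ∧ x ∈ U ∧ {α | (F α ∩ U).Nonempty}.Subsingleton)
    (hc : ∀ α, IsClosed (F α)) (B : Set ι) : IsClosed (⋃ β ∈ B, F β) := by
  rw [← isOpen_compl_iff, isOpen_iff_forall_mem_open]
  intro x hx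
  obtain ⟨U, hU, hxU, hss⟩ := hd x
  by_cases h : ∃ β ∈ B, (F β ∩ U).Nonempty
  · obtain ⟨β₀, hβ₀B, hβ₀⟩ := h
    refine ⟨U \ F β₀, ?_, hU.sdiff (hc β₀), hxU, fun hxF => hx (mem_biUnion hβ₀B hxF)⟩
    intro z ⟨hzU, hzF⟩ hzm
    obtain ⟨γ, hγB, hzγ⟩ := mem_iUnion₂.mp hzm
    have hγ : γ = β₀ := hss ⟨z, hzγ, hzU⟩ hβ₀
    exact hzF (hγ ▸ hzγ)
  · refine ⟨U, ?_, hU, hxU⟩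
    intro z hzU hzm
    obtain ⟨γ, hγB, hzγ⟩ := mem_iUnion₂.mp hzm
    exact h ⟨γ, hγB, ⟨z, hzγ, hzU⟩⟩

lemma helper_disjoint_of_witness {ι : Type*} {O : ι → Set Z}
    (hd : ∀ x, ∃ U, IsOpen U ∧ x ∈ U ∧ {i | (O i ∩ U).Nonempty}.Subsingleton)
    {i j : ι} (hij : i ≠ j) : Disjoint (O i) (O j) := by
  rw [Set.disjoint_left]
  intro z hzi hzj
  obtain ⟨U, hU, hzU, hss⟩ := hd z
  exact hij (hss ⟨z, hzi, hzU⟩ ⟨z, hzj, hzU⟩)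

lemma helper_cl_biUnion_closed {ι : Type*} {O : ι → Set Z}
    (hd : ∀ x, ∃ U, IsOpen U ∧ x ∈ U ∧ {i | (O i ∩ U).Nonempty}.Subsingleton)
    (S : Set ι) : IsClosed (⋃ i ∈ S, closure (O i)) := by
  rw [← isOpen_compl_iff, isOpen_iff_forall_mem_open]
  intro x hx
  obtain ⟨U, hU, hxU, hss⟩ := hd x
  by_cases h : ∃ i ∈ S, (closure (O i) ∩ U).Nonempty
  · obtain ⟨i₀, hi₀S, w, hwcl, hwU⟩ := h
    have hi₀ : (O i₀ ∩ U).Nonempty := by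
      obtain ⟨p, hp1, hp2⟩ := mem_closure_iff.mp hwcl U hU hwU
      exact ⟨p, hp2, hp1⟩
    have hxcl : x ∉ closure (O i₀) := fun hc => hx (mem_biUnion hi₀S hc)
    refine ⟨U \ closure (O i₀), ?_, hU.sdiff isClosed_closure, hxU, hxcl⟩
    intro z ⟨hzU, hzn⟩ hzm
    obtain ⟨γ, hγS, hzγ⟩ := mem_iUnion₂.mp hzm
    have hγne : (O γ ∩ U).Nonempty := by
      obtain ⟨p, hp1, hp2⟩ := mem_closure_iff.mp hzγ U hU hzU
      exact ⟨p, hp2, hp1⟩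
    exact hzn ((hss hγne hi₀ : γ = i₀) ▸ hzγ)
  · refine ⟨U, ?_, hU, hxU⟩
    intro z hzU hzm
    obtain ⟨γ, hγS, hzγ⟩ := mem_iUnion₂.mp hzm
    exact h ⟨γ, hγS, ⟨z, hzγ, hzU⟩⟩

lemma helper_discretize [NormalSpace Z] {ι : Type*} {K : ι → Set Z}
    (hKc : ∀ i, IsClosed (K i)) (hKu : IsClosed (⋃ i, K i)) {P : ι → Set Z}
    (hPo : ∀ i, IsOpen (P i)) (hKP : ∀ i, K i ⊆ P i)
    (hPd : Pairwise (Function.onFun Disjoint P)) :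
    ∃ O : ι → Set Z, (∀ i, IsOpen (O i)) ∧ (∀ i, K i ⊆ O i) ∧ (∀ i, O i ⊆ P i) ∧
      (∀ x, ∃ U, IsOpen U ∧ x ∈ U ∧ {i | (O i ∩ U).Nonempty}.Subsingleton) := by
  obtain ⟨G, hGo, hGsub, hGcl⟩ := normal_exists_closure_subset hKu (isOpen_iUnion hPo)
    (iUnion_mono hKP)
  refine ⟨fun i => P i ∩ G, fun i => (hPo i).inter hGo,
    fun i z hz => ⟨hKP i hz, hGsub (mem_iUnion.mpr ⟨i, hz⟩)⟩, fun i => inter_subset_left, ?_⟩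
  intro x
  by_cases hx : x ∈ closure G
  · obtain ⟨j, hj⟩ := mem_iUnion.mp (hGcl hx)
    refine ⟨P j, hPo j, hj, ?_⟩
    have key : ∀ i, (P i ∩ G ∩ P j).Nonempty → i = j := by
      intro i ⟨z, ⟨⟨hzPi, _⟩, hzPj⟩⟩
      by_contra hne
      exact Set.disjoint_left.mp (hPd hne) hzPi hzPj
    intro i hi i' hi'
    rw [key i hi, key i' hi']
  · refine ⟨(closure G)ᶜ, isClosed_closure.isOpen_compl, hx, ?_⟩
    intro i ⟨z, ⟨⟨_, hzG⟩, hzc⟩⟩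
    exact absurd (subset_closure hzG) hzc

/-- A uniform system of open sets around the points of a closed discrete set. -/
lemma helper_point_system [NormalSpace Z] {D : Set Z}
    (hDcl : IsClosed D) (hDdisc : DiscreteTopology D) {ι : Type*} {G : ι → Set Z}
    (hUB : ∀ B : Set ι, IsClosed (⋃ β ∈ B, G β))
    (hP : ∃ P : ↥D → Set Z, (∀ d, IsOpen (P d)) ∧ Pairwise (Function.onFun Disjoint P) ∧
      ∀ d : ↥D, ({(d : Z)} : Set Z) ⊆ P d) :
    ∃ OO : Z → Set Z, (∀ x, IsOpen (OO x)) ∧ (∀ x, x ∈ D → x ∈ OO x) ∧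
      (∀ x, x ∉ D → OO x = ∅) ∧
      (∀ x, x ∈ D → closure (OO x) ∩ D ⊆ {x}) ∧
      (∀ x, x ∈ D → ∀ β, x ∉ G β → Disjoint (closure (OO x)) (G β)) ∧
      (∀ x₀, ∃ U, IsOpen U ∧ x₀ ∈ U ∧ {z | (OO z ∩ U).Nonempty}.Subsingleton) := by
  obtain ⟨P, hPo, hPd, hPs⟩ := hP
  have hsub : ∀ S : Set Z, S ⊆ D → IsClosed S := fun S hS =>
    helper_subset_closed hDcl hDdisc hS
  have hKc : ∀ d : ↥D, IsClosed ({(d : Z)} : Set Z) := fun d =>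
    hsub _ (singleton_subset_iff.mpr d.2)
  have hKu : IsClosed (⋃ d : ↥D, ({(d : Z)} : Set Z)) := by
    have : (⋃ d : ↥D, ({(d : Z)} : Set Z)) = D := by
      ext x
      simp only [mem_iUnion, mem_singleton_iff]
      exact ⟨fun ⟨d, hd⟩ => hd ▸ d.2, fun hx => ⟨⟨x, hx⟩, rfl⟩⟩
    rw [this]; exact hDcl
  obtain ⟨O₁, hO₁o, hO₁K, hO₁P, hO₁w⟩ := helper_discretize hKc hKu hPo hPs hPd
  have hshrink : ∀ d : ↥D, ∃ Od : Set Z, IsOpen Od ∧ (d : Z) ∈ Od ∧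
      Od ⊆ O₁ d ∧ closure Od ∩ D ⊆ {(d : Z)} ∧
      ∀ β, (d : Z) ∉ G β → Disjoint (closure Od) (G β) := by
    intro d
    set R : Set Z := O₁ d ∩ (D \ {(d : Z)})ᶜ ∩ (⋃ β ∈ {β | (d : Z) ∉ G β}, G β)ᶜ with hR
    have hRo : IsOpen R :=
      (((hO₁o d).inter (hsub _ diff_subset).isOpen_compl).inter (hUB _).isOpen_compl)
    have hdR : (d : Z) ∈ R := by
      refine ⟨⟨hO₁K d rfl, fun h => h.2 rfl⟩, fun h => ?_⟩
      obtain ⟨β, hβ, hdF⟩ := mem_iUnion₂.mp h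
      exact hβ hdF
    obtain ⟨Od, ho, hs, hcl⟩ := normal_exists_closure_subset (hKc d) hRo
      (singleton_subset_iff.mpr hdR)
    refine ⟨Od, ho, hs rfl, fun z hz => ((hcl (subset_closure hz)).1).1, ?_, ?_⟩
    · intro z ⟨hz1, hz2⟩
      have := ((hcl hz1).1).2
      simp only [mem_compl_iff, mem_diff, not_and, not_not] at this
      exact this hz2
    · intro β hβ
      rw [Set.disjoint_left]
      intro z hz1 hz2
      exact ((hcl hz1).2) (mem_biUnion hβ hz2)
  choose O₂ hO₂o hO₂m hO₂sub hO₂D hO₂G using hshrink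
  classical
  refine ⟨fun x => if h : x ∈ D then O₂ ⟨x, h⟩ else ∅, ?_, ?_, ?_, ?_, ?_, ?_⟩
  · intro x
    by_cases h : x ∈ D
    · simpa only [dif_pos h] using hO₂o ⟨x, h⟩
    · simp only [dif_neg h]; exact isOpen_empty
  · intro x h; simpa only [dif_pos h] using hO₂m ⟨x, h⟩
  · intro x h; simp only [dif_neg h]
  · intro x h; simpa only [dif_pos h] using hO₂D ⟨x, h⟩
  · intro x h β hβ; simpa only [dif_pos h] using hO₂G ⟨x, h⟩ β hβ
  · intro x₀
    obtain ⟨U, hU, hxU, hss⟩ := hO₁w x₀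
    refine ⟨U, hU, hxU, ?_⟩
    intro z hz z' hz'
    simp only [mem_setOf_eq] at hz hz'
    by_cases h : z ∈ D
    · by_cases h' : z' ∈ D
      · rw [dif_pos h] at hz
        rw [dif_pos h'] at hz'
        have h1 : (O₁ ⟨z, h⟩ ∩ U).Nonempty := hz.mono (inter_subset_inter_left _ (hO₂sub _))
        have h2 : (O₁ ⟨z', h'⟩ ∩ U).Nonempty := hz'.mono (inter_subset_inter_left _ (hO₂sub _))
        exact congrArg Subtype.val (hss h1 h2)
      · rw [dif_neg h'] at hz'; simp at hz'
    · rw [dif_neg h] at hz; simp at hz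

end Helpers

section KeyDefs
variable {X : Type u} {Y : Type v} {ι : Type*}

def seqC (DX : Set X) (DY : Set Y) (φ : Y → X) (OO : X → Set X) (MM : Y → Set Y)
    (V : ι → Set X) (C0 : ι → Set Y) : ℕ → ι → Set Y
  | 0 => C0
  | n + 1 => fun α =>
      seqC DX DY φ OO MM V C0 n α ∪
        ⋃ y ∈ DY ∩ φ ⁻¹' (V α ∪ ⋃ c ∈ seqC DX DY φ OO MM V C0 n α, (OO (φ c) \ DX)),
          (MM y ∩ DYᶜ)

def seqV (DX : Set X) (DY : Set Y) (φ : Y → X) (OO : X → Set X) (MM : Y → Set Y)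
    (V : ι → Set X) (C0 : ι → Set Y) (n : ℕ) (α : ι) : Set X :=
  V α ∪ ⋃ c ∈ seqC DX DY φ OO MM V C0 n α, (OO (φ c) \ DX)

lemma seqC_succ (DX : Set X) (DY : Set Y) (φ : Y → X) (OO : X → Set X) (MM : Y → Set Y)
    (V : ι → Set X) (C0 : ι → Set Y) (n : ℕ) (α : ι) :
    seqC DX DY φ OO MM V C0 (n + 1) α =
      seqC DX DY φ OO MM V C0 n α ∪
        ⋃ y ∈ DY ∩ φ ⁻¹' (seqV DX DY φ OO MM V C0 n α), (MM y ∩ DYᶜ) := rfl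

end KeyDefs

lemma key_sep {X : Type u} {Y : Type v} (tX : TopologicalSpace X) (tY : TopologicalSpace Y)
    (DX : Set X) (DY : Set Y) (φ : Y → X)
    (hDX : ClosedDiscrete tX DX) (hDY : ClosedDiscrete tY DY)
    (hinj : Function.Injective φ)
    (himg : φ '' DYᶜ = DX)
    (hdense : @Dense X tX (Set.range φ))
    (hX : CollectionwiseNormal tX) (hY : CollectionwiseNormal tY)
    {ι : Type*} (F : ι → Set X)
    (hUBX : ∀ B : Set ι, @IsClosed X tX (⋃ β ∈ B, F β))
    (hUBY : ∀ B : Set ι, @IsClosed Y tY (⋃ β ∈ B, φ ⁻¹' (F β)))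
    (hsepX : ∃ Vt : ι → Set X, (∀ α, tX.IsOpen (Vt α)) ∧
      Pairwise (Function.onFun Disjoint Vt) ∧ ∀ α, F α ⊆ Vt α)
    (hsepY : ∃ W : ι → Set Y, (∀ α, tY.IsOpen (W α)) ∧
      Pairwise (Function.onFun Disjoint W) ∧ ∀ α, φ ⁻¹' (F α) ⊆ W α) :
    ∃ H : ι → Set X, (∀ α, (sigmaTop tX tY φ).IsOpen (H α)) ∧
      Pairwise (Function.onFun Disjoint H) ∧ ∀ α, F α ⊆ H α := by
  classical
  letI := tX
  letI := tY
  haveI hXn : NormalSpace X := hX.1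
  haveI hYn : NormalSpace Y := hY.1
  obtain ⟨Vt, hVto', hVtd, hVts⟩ := hsepX
  obtain ⟨W, hWo', hWd, hWs⟩ := hsepY
  have hVto : ∀ α, IsOpen (Vt α) := hVto'
  have hWo : ∀ α, IsOpen (W α) := hWo' 
  have hDXcl : IsClosed DX := hDX.1
  have hDYcl : IsClosed DY := hDY.1
  have hDXdisc : DiscreteTopology DX := hDX.2
  have hDYdisc : DiscreteTopology DY := hDY.2
  have hsubX : ∀ S : Set X, S ⊆ DX → IsClosed S := fun S hS =>
    helper_subset_closed hDXcl hDXdisc hS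
  have hsubY : ∀ S : Set Y, S ⊆ DY → IsClosed S := fun S hS =>
    helper_subset_closed hDYcl hDYdisc hS
  have hpre : φ ⁻¹' DX = DYᶜ := by
    ext y
    simp only [mem_preimage, mem_compl_iff]
    constructor
    · intro h hy
      rw [← himg] at h
      obtain ⟨y', hy', he⟩ := h
      exact hy' (hinj he ▸ hy)
    · intro h
      rw [← himg]
      exact ⟨y, h, rfl⟩
  have hφDX : ∀ {z : Y}, z ∉ DY → φ z ∈ DX := fun {z} hz => by
    have : z ∈ φ ⁻¹' DX := by rw [hpre]; exact hz
    exact this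
  have hφnDX : ∀ {z : Y}, z ∈ DY → φ z ∉ DX := fun {z} hz h => by
    have h2 : z ∈ φ ⁻¹' DX := h
    rw [hpre] at h2
    exact h2 hz
  -- the O system on X
  have hOsys : ∃ OO : X → Set X, (∀ x, IsOpen (OO x)) ∧ (∀ x, x ∈ DX → x ∈ OO x) ∧
      (∀ x, x ∉ DX → OO x = ∅) ∧
      (∀ x, x ∈ DX → closure (OO x) ∩ DX ⊆ {x}) ∧
      (∀ x, x ∈ DX → ∀ β, x ∉ F β → Disjoint (closure (OO x)) (F β)) ∧
      (∀ x₀, ∃ U, IsOpen U ∧ x₀ ∈ U ∧ {z | (OO z ∩ U).Nonempty}.Subsingleton) := by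
    refine helper_point_system hDXcl hDXdisc hUBX ?_
    apply hX.2 (fun d : ↥DX => ({(d : X)} : Set X))
    · intro x
      by_cases hx : x ∈ DX
      · obtain ⟨U, hU, hUD⟩ := helper_isolated hDXdisc hx
        refine ⟨U, hU, ?_, ?_⟩
        · have : x ∈ U ∩ DX := by rw [hUD]; rfl
          exact this.1
        · intro i hi j hj
          obtain ⟨z, hz1, hz2⟩ := hi
          obtain ⟨w, hw1, hw2⟩ := hj
          rw [mem_singleton_iff] at hz1 hw1
          have hi' : (i : X) ∈ U ∩ DX := ⟨hz1 ▸ hz2, i.2⟩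
          have hj' : (j : X) ∈ U ∩ DX := ⟨hw1 ▸ hw2, j.2⟩
          rw [hUD, mem_singleton_iff] at hi' hj'
          exact Subtype.ext (hi'.trans hj'.symm)
      · refine ⟨DXᶜ, hDXcl.isOpen_compl, hx, ?_⟩
        intro i hi
        obtain ⟨z, hz1, hz2⟩ := hi
        rw [mem_singleton_iff] at hz1
        exact absurd i.2 (hz1 ▸ hz2)
    · exact fun d => hsubX _ (singleton_subset_iff.mpr d.2)
    · intro i j hij
      simp only [Function.onFun, Set.disjoint_singleton_left, mem_singleton_iff]
      exact fun h => hij (Subtype.ext h)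
  obtain ⟨OO, hOOo, hOOm, hOOe, hOODX, hOOF, hOOw⟩ := hOsys
  have hOOdisj : ∀ z z' : X, z ≠ z' → Disjoint (OO z) (OO z') :=
    fun z z' h => helper_disjoint_of_witness hOOw h
  have hOOcls : ∀ S : Set X, IsClosed (⋃ x ∈ S, closure (OO x)) :=
    helper_cl_biUnion_closed hOOw
  -- the M system on Y
  have hMsys : ∃ MM : Y → Set Y, (∀ y, IsOpen (MM y)) ∧ (∀ y, y ∈ DY → y ∈ MM y) ∧
      (∀ y, y ∉ DY → MM y = ∅) ∧
      (∀ y, y ∈ DY → closure (MM y) ∩ DY ⊆ {y}) ∧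
      (∀ y, y ∈ DY → ∀ β, y ∉ φ ⁻¹' (F β) → Disjoint (closure (MM y)) (φ ⁻¹' (F β))) ∧
      (∀ y₀, ∃ U, IsOpen U ∧ y₀ ∈ U ∧ {z | (MM z ∩ U).Nonempty}.Subsingleton) := by
    refine helper_point_system hDYcl hDYdisc hUBY ?_
    apply hY.2 (fun d : ↥DY => ({(d : Y)} : Set Y))
    · intro y
      by_cases hy : y ∈ DY
      · obtain ⟨U, hU, hUD⟩ := helper_isolated hDYdisc hy
        refine ⟨U, hU, ?_, ?_⟩
        · have : y ∈ U ∩ DY := by rw [hUD]; rfl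
          exact this.1
        · intro i hi j hj
          obtain ⟨z, hz1, hz2⟩ := hi
          obtain ⟨w, hw1, hw2⟩ := hj
          rw [mem_singleton_iff] at hz1 hw1
          have hi' : (i : Y) ∈ U ∩ DY := ⟨hz1 ▸ hz2, i.2⟩
          have hj' : (j : Y) ∈ U ∩ DY := ⟨hw1 ▸ hw2, j.2⟩
          rw [hUD, mem_singleton_iff] at hi' hj'
          exact Subtype.ext (hi'.trans hj'.symm)
      · refine ⟨DYᶜ, hDYcl.isOpen_compl, hy, ?_⟩
        intro i hi
        obtain ⟨z, hz1, hz2⟩ := hi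
        rw [mem_singleton_iff] at hz1
        exact absurd i.2 (hz1 ▸ hz2)
    · exact fun d => hsubY _ (singleton_subset_iff.mpr d.2)
    · intro i j hij
      simp only [Function.onFun, Set.disjoint_singleton_left, mem_singleton_iff]
      exact fun h => hij (Subtype.ext h)
  obtain ⟨MM, hMMo, hMMm, hMMe, hMMDY, hMMF, hMMw⟩ := hMsys
  have hMMdisj : ∀ z z' : Y, z ≠ z' → Disjoint (MM z) (MM z') :=
    fun z z' h => helper_disjoint_of_witness hMMw h
  have hMMcls : ∀ S : Set Y, IsClosed (⋃ y ∈ S, closure (MM y)) :=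
    helper_cl_biUnion_closed hMMw
  -- base X-side open sets
  set V : ι → Set X := fun α => Vt α \ ⋃ x ∈ (F α)ᶜ, closure (OO x) with hVdef
  have hVo : ∀ α, IsOpen (V α) := fun α => (hVto α).sdiff (hOOcls _)
  have hVs : ∀ α, F α ⊆ V α := by
    intro α x hx
    refine ⟨hVts α hx, fun hmem => ?_⟩
    obtain ⟨x', hx', hxcl⟩ := mem_iUnion₂.mp hmem
    by_cases h : x' ∈ DX
    · exact Set.disjoint_left.mp (hOOF x' h α hx') hxcl hx
    · rw [hOOe x' h, closure_empty] at hxcl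
      exact hxcl
  have hVd : ∀ α β, α ≠ β → Disjoint (V α) (V β) := fun α β h =>
    (hVtd h).mono diff_subset diff_subset
  have hVOO : ∀ α x, x ∉ F α → Disjoint (V α) (closure (OO x)) := by
    intro α x hx
    rw [Set.disjoint_left]
    intro z hz hzcl
    exact hz.2 (mem_biUnion hx hzcl)
  -- base Y-side open sets
  set C0 : ι → Set Y := fun α => (W α ∩ DYᶜ) \ ⋃ y ∈ (φ ⁻¹' (F α))ᶜ, closure (MM y) with hC0def
  have hC0o : ∀ α, IsOpen (C0 α) := fun α =>
    ((hWo α).inter hDYcl.isOpen_compl).sdiff (hMMcls _)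
  have hC0s : ∀ α, φ ⁻¹' (F α) ∩ DYᶜ ⊆ C0 α := by
    intro α z hz
    refine ⟨⟨hWs α hz.1, hz.2⟩, fun hmem => ?_⟩
    obtain ⟨y', hy', hzcl⟩ := mem_iUnion₂.mp hmem
    by_cases h : y' ∈ DY
    · exact Set.disjoint_left.mp (hMMF y' h α hy') hzcl hz.1
    · rw [hMMe y' h, closure_empty] at hzcl
      exact hzcl
  have hC0W : ∀ α, C0 α ⊆ W α := fun α z hz => hz.1.1
  have hC0DY : ∀ α, C0 α ⊆ DYᶜ := fun α z hz => hz.1.2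
  have hC0M : ∀ α y, y ∉ φ ⁻¹' (F α) → Disjoint (C0 α) (closure (MM y)) := by
    intro α y hy
    rw [Set.disjoint_left]
    intro z hz hzcl
    exact hz.2 (mem_biUnion hy hzcl)
  -- iteration
  set C : ℕ → ι → Set Y := seqC DX DY φ OO MM V C0 with hCdef
  set VV : ℕ → ι → Set X := seqV DX DY φ OO MM V C0 with hVVdef
  have hC0eq : C 0 = C0 := rfl
  have hCsucc : ∀ n α, C (n + 1) α = C n α ∪
      ⋃ y ∈ DY ∩ φ ⁻¹' (VV n α), (MM y ∩ DYᶜ) := fun n α => rfl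
  have hVVeq : ∀ n α, VV n α = V α ∪ ⋃ c ∈ C n α, (OO (φ c) \ DX) := fun n α => rfl
  have hCDY : ∀ n α, C n α ⊆ DYᶜ := by
    intro n
    induction n with
    | zero => exact hC0DY
    | succ n ih =>
      intro α z hz
      rcases hz with hz | hz
      · exact ih α hz
      · obtain ⟨y, _, hz2⟩ := mem_iUnion₂.mp hz
        exact hz2.2
  have hCo : ∀ n α, IsOpen (C n α) := by
    intro n
    induction n with
    | zero => exact hC0o
    | succ n ih =>
      intro α
      exact (ih α).union (isOpen_biUnion fun y _ => (hMMo y).inter hDYcl.isOpen_compl)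
  have hCmono : ∀ n m α, n ≤ m → C n α ⊆ C m α := by
    intro n m α h
    induction h with
    | refl => exact subset_rfl
    | step h ih => exact ih.trans subset_union_left
  have hVVo : ∀ n α, IsOpen (VV n α) := fun n α =>
    (hVo α).union (isOpen_biUnion fun c _ => (hOOo (φ c)).sdiff hDXcl)
  have hCdest : ∀ n α z, z ∈ C n α → z ∈ C0 α ∨
      ∃ n', n' < n ∧ ∃ y, y ∈ DY ∧ φ y ∈ VV n' α ∧ z ∈ MM y ∩ DYᶜ := by
    intro n
    induction n with
    | zero => exact fun α z hz => Or.inl hz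
    | succ n ih =>
      intro α z hz
      rcases hz with hz | hz
      · rcases ih α z hz with h | ⟨n', hn', hrest⟩
        · exact Or.inl h
        · exact Or.inr ⟨n', Nat.lt_succ_of_lt hn', hrest⟩
      · obtain ⟨y, hy, hz2⟩ := mem_iUnion₂.mp hz
        exact Or.inr ⟨n, Nat.lt_succ_self n, y, hy.1, hy.2, hz2⟩
  -- P8: α-generated sets avoid foreign F's
  have hP8Vgen : ∀ n α β, α ≠ β → (∀ z ∈ C n α, φ z ∉ F β) →
      ∀ x ∈ VV n α, x ∉ F β := by
    intro n α β hne hC x hx hxF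
    rw [hVVeq] at hx
    rcases hx with hx | hx
    · exact Set.disjoint_left.mp (hVtd hne) hx.1 (hVts β hxF)
    · obtain ⟨c, hc, hxc⟩ := mem_iUnion₂.mp hx
      have hcDX : φ c ∈ DX := hφDX (hCDY n α hc)
      exact Set.disjoint_left.mp (hOOF (φ c) hcDX β (hC c hc))
        (subset_closure hxc.1) hxF
  have hP8C : ∀ n α β, α ≠ β → ∀ z ∈ C n α, φ z ∉ F β := by
    intro n
    induction n with
    | zero =>
      intro α β hne z hz hzF
      exact Set.disjoint_left.mp (hWd hne) (hC0W α hz) (hWs β hzF)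
    | succ n ih =>
      intro α β hne z hz hzF
      rcases hz with hz | hz
      · exact ih α β hne z hz hzF
      · obtain ⟨y, hy, hz2⟩ := mem_iUnion₂.mp hz
        have hyn : y ∉ φ ⁻¹' (F β) := hP8Vgen n α β hne (ih α β hne) (φ y) hy.2
        exact Set.disjoint_left.mp (hMMF y hy.1 β hyn) (subset_closure hz2.1) hzF
  have hP8V : ∀ n α β, α ≠ β → ∀ x ∈ VV n α, x ∉ F β := fun n α β hne =>
    hP8Vgen n α β hne (hP8C n α β hne)
  -- P9: cross-level disjointness
  have hP9V : ∀ n m α β, α ≠ β → (∀ z, z ∈ C n α → z ∈ C m β → False) →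
      ∀ x, x ∈ VV n α → x ∈ VV m β → False := by
    intro n m α β hne hCd x hx1 hx2
    rw [hVVeq] at hx1 hx2
    rcases hx1 with hx1 | hx1
    · rcases hx2 with hx2 | hx2
      · exact Set.disjoint_left.mp (hVd α β hne) hx1 hx2
      · obtain ⟨c', hc', hxc'⟩ := mem_iUnion₂.mp hx2
        exact Set.disjoint_left.mp (hVOO α (φ c') (hP8C m β α hne.symm c' hc'))
          hx1 (subset_closure hxc'.1)
    · obtain ⟨c, hc, hxc⟩ := mem_iUnion₂.mp hx1
      rcases hx2 with hx2 | hx2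
      · exact Set.disjoint_left.mp (hVOO β (φ c) (hP8C n α β hne c hc))
          hx2 (subset_closure hxc.1)
      · obtain ⟨c', hc', hxc'⟩ := mem_iUnion₂.mp hx2
        by_cases h : φ c = φ c'
        · exact hCd c hc (hinj h ▸ hc')
        · exact Set.disjoint_left.mp (hOOdisj (φ c) (φ c') h) hxc.1 hxc'.1
  have hP9C : ∀ p n m, n + m = p → ∀ α β, α ≠ β →
      ∀ z, z ∈ C n α → z ∈ C m β → False := by
    intro p
    induction p using Nat.strong_induction_on with
    | _ p ih =>
      intro n m hp α β hne z hzα hzβ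
      rcases hCdest n α z hzα with h0α | ⟨n', hn', y, hyDY, hyVV, hzM⟩
      · rcases hCdest m β z hzβ with h0β | ⟨m', hm', y', hy'DY, hy'VV, hz'M⟩
        · exact Set.disjoint_left.mp (hWd hne) (hC0W α h0α) (hC0W β h0β)
        · have hy'n : y' ∉ φ ⁻¹' (F α) := hP8V m' β α hne.symm (φ y') hy'VV
          exact Set.disjoint_left.mp (hC0M α y' hy'n) h0α (subset_closure hz'M.1)
      · rcases hCdest m β z hzβ with h0β | ⟨m', hm', y', hy'DY, hy'VV, hz'M⟩
        · have hyn : y ∉ φ ⁻¹' (F β) := hP8V n' α β hne (φ y) hyVV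
          exact Set.disjoint_left.mp (hC0M β y hyn) h0β (subset_closure hzM.1)
        · by_cases h : y = y'
          · subst h
            refine hP9V n' m' α β hne ?_ (φ y) hyVV hy'VV
            intro w hw1 hw2
            exact ih (n' + m') (by omega) n' m' rfl α β hne w hw1 hw2
          · exact Set.disjoint_left.mp (hMMdisj y y' h) hzM.1 hz'M.1
  -- final objects
  set Cinf : ι → Set Y := fun α => ⋃ n, C n α with hCinfdef
  set Vinf : ι → Set X := fun α => ⋃ n, VV n α with hVinfdef
  set H : ι → Set X := fun α =>
    (V α \ DX) ∪ ⋃ c ∈ Cinf α, (OO (φ c) \ (DX \ {φ c})) with hHdef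
  have hCinfDY : ∀ α, Cinf α ⊆ DYᶜ := by
    intro α z hz
    obtain ⟨n, hn⟩ := mem_iUnion.mp hz
    exact hCDY n α hn
  have hVinfiff : ∀ α x, x ∈ Vinf α ↔ x ∈ V α ∨ ∃ c ∈ Cinf α, x ∈ OO (φ c) \ DX := by
    intro α x
    constructor
    · intro hx
      obtain ⟨n, hn⟩ := mem_iUnion.mp hx
      rw [hVVeq] at hn
      rcases hn with hn | hn
      · exact Or.inl hn
      · obtain ⟨c, hc, hxc⟩ := mem_iUnion₂.mp hn
        exact Or.inr ⟨c, mem_iUnion.mpr ⟨n, hc⟩, hxc⟩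
    · intro hx
      rcases hx with hx | ⟨c, hc, hxc⟩
      · exact mem_iUnion.mpr ⟨0, Or.inl hx⟩
      · obtain ⟨n, hn⟩ := mem_iUnion.mp hc
        exact mem_iUnion.mpr ⟨n, by rw [hVVeq]; exact Or.inr (mem_biUnion hn hxc)⟩
  -- H is tX-open
  have hHo : ∀ α, IsOpen (H α) := by
    intro α
    refine ((hVo α).sdiff hDXcl).union (isOpen_biUnion fun c hc => ?_)
    exact (hOOo (φ c)).sdiff (hsubX _ diff_subset)
  -- F α ⊆ H α
  have hHsub : ∀ α, F α ⊆ H α := by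
    intro α x hx
    by_cases h : x ∈ DX
    · have : x ∈ φ '' DYᶜ := himg ▸ h
      obtain ⟨c, hcDY, rfl⟩ := this
      have hc0 : c ∈ C0 α := hC0s α ⟨hx, hcDY⟩
      refine Or.inr (mem_biUnion (mem_iUnion.mpr ⟨0, hc0⟩) ?_)
      exact ⟨hOOm (φ c) h, fun hmem => hmem.2 rfl⟩
    · exact Or.inl ⟨hVs α hx, h⟩
  -- preimage identity
  have hpreH : ∀ α, φ ⁻¹' (H α) = Cinf α ∪ (DY ∩ φ ⁻¹' (Vinf α)) := by
    intro α
    ext z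
    constructor
    · intro hz
      rcases hz with hz | hz
      · have hzDY : z ∈ DY := by
          by_contra h
          exact hz.2 (hφDX h)
        refine Or.inr ⟨hzDY, ?_⟩
        exact (hVinfiff α (φ z)).mpr (Or.inl hz.1)
      · obtain ⟨c, hc, hzc⟩ := mem_iUnion₂.mp hz
        by_cases h : φ z = φ c
        · exact Or.inl (hinj h ▸ hc)
        · have hznDX : φ z ∉ DX := fun hmem => hzc.2 ⟨hmem, h⟩
          have hzDY : z ∈ DY := by
            by_contra hh
            exact hznDX (hφDX hh)
          refine Or.inr ⟨hzDY, ?_⟩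
          exact (hVinfiff α (φ z)).mpr (Or.inr ⟨c, hc, hzc.1, hznDX⟩)
    · intro hz
      rcases hz with hz | hz
      · refine Or.inr (mem_biUnion hz ?_)
        have hzDX : φ z ∈ DX := hφDX (hCinfDY α hz)
        exact ⟨hOOm (φ z) hzDX, fun hmem => hmem.2 rfl⟩
      · have hznDX : φ z ∉ DX := hφnDX hz.1
        rcases (hVinfiff α (φ z)).mp hz.2 with h | ⟨c, hc, hzc⟩
        · exact Or.inl ⟨h, hznDX⟩
        · exact Or.inr (mem_biUnion hc ⟨hzc.1, fun hmem => hznDX hmem.1⟩)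
  -- preimage is tY-open
  have hpreHo : ∀ α, IsOpen (φ ⁻¹' (H α)) := by
    intro α
    have hEq : φ ⁻¹' (H α) = Cinf α ∪ ⋃ y ∈ DY ∩ φ ⁻¹' (Vinf α), MM y := by
      rw [hpreH]
      apply Subset.antisymm
      · refine union_subset subset_union_left ?_
        intro z hz
        exact Or.inr (mem_biUnion hz (hMMm z hz.1))
      · refine union_subset subset_union_left ?_
        intro z hz
        obtain ⟨y, hy, hzy⟩ := mem_iUnion₂.mp hz
        by_cases h : z ∈ DY
        · have : z = y := hMMDY y hy.1 ⟨subset_closure hzy, h⟩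
          exact Or.inr ⟨this ▸ hy.1, this ▸ hy.2⟩
        · obtain ⟨n, hn⟩ := mem_iUnion.mp hy.2
          have : z ∈ C (n + 1) α := by
            rw [hCsucc]
            exact Or.inr (mem_biUnion ⟨hy.1, hn⟩ ⟨hzy, h⟩)
          exact Or.inl (mem_iUnion.mpr ⟨n + 1, this⟩)
    rw [hEq]
    exact (isOpen_iUnion fun n => hCo n α).union (isOpen_biUnion fun y _ => hMMo y)
  -- σ-openness
  have hHσ : ∀ α, (sigmaTop tX tY φ).IsOpen (H α) := fun α => ⟨hHo α, hpreHo α⟩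
  -- preimages pairwise disjoint
  have hpredisj : ∀ α β, α ≠ β → ∀ z, z ∈ φ ⁻¹' (H α) → z ∈ φ ⁻¹' (H β) → False := by
    intro α β hne z hz1 hz2
    rw [hpreH] at hz1 hz2
    rcases hz1 with hz1 | hz1 <;> rcases hz2 with hz2 | hz2
    · obtain ⟨n, hn⟩ := mem_iUnion.mp hz1
      obtain ⟨m, hm⟩ := mem_iUnion.mp hz2
      exact hP9C (n + m) n m rfl α β hne z hn hm
    · exact (hCinfDY α hz1) hz2.1
    · exact (hCinfDY β hz2) hz1.1
    · obtain ⟨n, hn⟩ := mem_iUnion.mp hz1.2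
      obtain ⟨m, hm⟩ := mem_iUnion.mp hz2.2
      refine hP9V n m α β hne ?_ (φ z) hn hm
      intro w hw1 hw2
      exact hP9C (n + m) n m rfl α β hne w hw1 hw2
  -- disjointness via density
  have hHd : Pairwise (Function.onFun Disjoint H) := by
    intro α β hne
    rw [Function.onFun, Set.disjoint_iff_inter_eq_empty]
    by_contra h
    obtain ⟨x, hx⟩ := nonempty_iff_ne_empty.mpr h
    obtain ⟨w, hwmem, hwin⟩ := hdense.exists_mem_open ((hHo α).inter (hHo β)) ⟨x, hx⟩
    obtain ⟨z, rfl⟩ := hwmem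
    exact hpredisj α β hne z hwin.1 hwin.2
  exact ⟨H, hHσ, hHd, hHsub⟩


lemma sigma_isOpen_iff {X : Type u} {Y : Type v} (tX : TopologicalSpace X)
    (tY : TopologicalSpace Y) (φ : Y → X) (U : Set X) :
    (sigmaTop tX tY φ).IsOpen U ↔ tX.IsOpen U ∧ tY.IsOpen (φ ⁻¹' U) := Iff.rfl

theorem statement7 {X : Type u} {Y : Type v} (tX : TopologicalSpace X) (tY : TopologicalSpace Y)
    (DX : Set X) (DY : Set Y) (φ : Y → X)
    (hDX : ClosedDiscrete tX DX) (hDY : ClosedDiscrete tY DY)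
    (hinj : Function.Injective φ)
    (himg : φ '' DYᶜ = DX)
    (hdense : @Dense X tX (Set.range φ))
    (hX : CollectionwiseNormal tX) (hY : CollectionwiseNormal tY) :
    CollectionwiseNormal (sigmaTop tX tY φ) := by
  classical
  have hclX : ∀ s : Set X, @IsClosed X (sigmaTop tX tY φ) s → @IsClosed X tX s := by
    intro s hs
    have h := @IsClosed.isOpen_compl X (sigmaTop tX tY φ) s hs
    exact ⟨((sigma_isOpen_iff tX tY φ sᶜ).mp h).1⟩
  have hclY : ∀ s : Set X, @IsClosed X (sigmaTop tX tY φ) s →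
      @IsClosed Y tY (φ ⁻¹' s) := by
    intro s hs
    have h := ((sigma_isOpen_iff tX tY φ sᶜ).mp
      (@IsClosed.isOpen_compl X (sigmaTop tX tY φ) s hs)).2
    rw [Set.preimage_compl] at h
    exact ⟨h⟩
  constructor
  · -- normality
    letI := sigmaTop tX tY φ
    constructor
    intro s t hs ht hd
    set Fam : Bool → Set X := fun b => cond b s t with hFamdef
    have hFamX : ∀ b, @IsClosed X tX (Fam b) := by
      intro b; cases b
      · exact hclX t ht
      · exact hclX s hs
    have hFamY : ∀ b, @IsClosed Y tY (φ ⁻¹' (Fam b)) := by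
      intro b; cases b
      · exact hclY t ht
      · exact hclY s hs
    have hUBX : ∀ B : Set Bool, @IsClosed X tX (⋃ β ∈ B, Fam β) := by
      intro B
      letI := tX
      exact (Set.toFinite B).isClosed_biUnion fun b _ => hFamX b
    have hUBY : ∀ B : Set Bool, @IsClosed Y tY (⋃ β ∈ B, φ ⁻¹' (Fam β)) := by
      intro B
      letI := tY
      exact (Set.toFinite B).isClosed_biUnion fun b _ => hFamY b
    have hsepX : ∃ Vt : Bool → Set X, (∀ α, tX.IsOpen (Vt α)) ∧
        Pairwise (Function.onFun Disjoint Vt) ∧ ∀ α, Fam α ⊆ Vt α := by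
      obtain ⟨U, Vv, hU, hV, hsU, htV, hUV⟩ :=
        @NormalSpace.normal X tX hX.1 s t (hclX s hs) (hclX t ht) hd
      refine ⟨fun b => cond b U Vv, ?_, ?_, ?_⟩
      · intro b; cases b
        · exact hV
        · exact hU
      · intro b b' hbb
        cases b <;> cases b' <;> simp only [Function.onFun, cond]
        · exact absurd rfl hbb
        · exact hUV.symm
        · exact hUV
        · exact absurd rfl hbb
      · intro b; cases b
        · exact htV
        · exact hsU
    have hsepY : ∃ W : Bool → Set Y, (∀ α, tY.IsOpen (W α)) ∧
        Pairwise (Function.onFun Disjoint W) ∧ ∀ α, φ ⁻¹' (Fam α) ⊆ W α := by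
      obtain ⟨U, Vv, hU, hV, hsU, htV, hUV⟩ :=
        @NormalSpace.normal Y tY hY.1 (φ ⁻¹' s) (φ ⁻¹' t) (hclY s hs) (hclY t ht)
          (hd.preimage φ)
      refine ⟨fun b => cond b U Vv, ?_, ?_, ?_⟩
      · intro b; cases b
        · exact hV
        · exact hU
      · intro b b' hbb
        cases b <;> cases b' <;> simp only [Function.onFun, cond]
        · exact absurd rfl hbb
        · exact hUV.symm
        · exact hUV
        · exact absurd rfl hbb
      · intro b; cases b
        · exact htV
        · exact hsU
    obtain ⟨H, hHσ, hHd, hHsub⟩ := key_sep tX tY DX DY φ hDX hDY hinj himg hdense hX hY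
      Fam hUBX hUBY hsepX hsepY
    exact ⟨H true, H false, hHσ true, hHσ false, hHsub true, hHsub false,
      hHd (by simp : true ≠ false)⟩
  · -- collectionwise part
    intro A Fam hdisc hcl hpw
    have hFamX : ∀ α, @IsClosed X tX (Fam α) := fun α => hclX _ (hcl α)
    have hFamY : ∀ α, @IsClosed Y tY (φ ⁻¹' (Fam α)) := fun α => hclY _ (hcl α)
    have hdX : ∀ x : X, ∃ U, tX.IsOpen U ∧ x ∈ U ∧
        {α | (Fam α ∩ U).Nonempty}.Subsingleton := by
      intro x
      obtain ⟨U, hU, hx, hss⟩ := hdisc x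
      exact ⟨U, ((sigma_isOpen_iff tX tY φ U).mp hU).1, hx, hss⟩
    have hdY : ∀ y : Y, ∃ U, tY.IsOpen U ∧ y ∈ U ∧
        {α | (φ ⁻¹' (Fam α) ∩ U).Nonempty}.Subsingleton := by
      intro y
      obtain ⟨U, hU, hx, hss⟩ := hdisc (φ y)
      refine ⟨φ ⁻¹' U, ((sigma_isOpen_iff tX tY φ U).mp hU).2, hx, ?_⟩
      intro i hi j hj
      obtain ⟨z, hz1, hz2⟩ := hi
      obtain ⟨w, hw1, hw2⟩ := hj
      exact hss ⟨φ z, hz1, hz2⟩ ⟨φ w, hw1, hw2⟩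
    have hUBX : ∀ B : Set A, @IsClosed X tX (⋃ β ∈ B, Fam β) := by
      intro B
      letI := tX
      exact helper_biUnion_closed hdX hFamX B
    have hUBY : ∀ B : Set A, @IsClosed Y tY (⋃ β ∈ B, φ ⁻¹' (Fam β)) := by
      intro B
      letI := tY
      exact helper_biUnion_closed hdY hFamY B
    have hsepX : ∃ Vt : A → Set X, (∀ α, tX.IsOpen (Vt α)) ∧
        Pairwise (Function.onFun Disjoint Vt) ∧ ∀ α, Fam α ⊆ Vt α :=
      hX.2 Fam hdX hFamX hpw
    have hsepY : ∃ W : A → Set Y, (∀ α, tY.IsOpen (W α)) ∧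
        Pairwise (Function.onFun Disjoint W) ∧ ∀ α, φ ⁻¹' (Fam α) ⊆ W α := by
      -- reindex through the (Type v) family of subsets of Y to match universes
      set S : Set (Set Y) := Set.range (fun α => φ ⁻¹' (Fam α)) with hSdef
      have hG : ∃ U : ↥S → Set Y, (∀ σ, tY.IsOpen (U σ)) ∧
          Pairwise (Function.onFun Disjoint U) ∧ ∀ σ : ↥S, (σ : Set Y) ⊆ U σ := by
        apply hY.2 (fun σ : ↥S => (σ : Set Y))
        · intro y
          obtain ⟨U, hU, hy, hss⟩ := hdY y
          refine ⟨U, hU, hy, ?_⟩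
          intro i hi j hj
          obtain ⟨αi, hαi⟩ := i.2
          obtain ⟨αj, hαj⟩ := j.2
          have hi' : (φ ⁻¹' (Fam αi) ∩ U).Nonempty := by
            rw [show φ ⁻¹' (Fam αi) = (i : Set Y) from hαi]; exact hi
          have hj' : (φ ⁻¹' (Fam αj) ∩ U).Nonempty := by
            rw [show φ ⁻¹' (Fam αj) = (j : Set Y) from hαj]; exact hj
          have : αi = αj := hss hi' hj'
          exact Subtype.ext (hαi.symm.trans (this ▸ hαj))
        · intro σ
          obtain ⟨α, hα⟩ := σ.2
          exact hα ▸ hFamY α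
        · intro i j hij
          simp only [Function.onFun]
          obtain ⟨αi, hαi⟩ := i.2
          obtain ⟨αj, hαj⟩ := j.2
          have hne : αi ≠ αj := by
            rintro rfl
            exact hij (Subtype.ext (hαi.symm.trans hαj))
          rw [← hαi, ← hαj]
          exact (hpw hne).preimage φ
      obtain ⟨U, hUo, hUd, hUs⟩ := hG
      refine ⟨fun α => if h : (φ ⁻¹' (Fam α)).Nonempty then
        U ⟨φ ⁻¹' (Fam α), ⟨α, rfl⟩⟩ else ∅, ?_, ?_, ?_⟩
      · intro α
        by_cases h : (φ ⁻¹' (Fam α)).Nonempty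
        · simpa only [dif_pos h] using hUo _
        · simp only [dif_neg h]; exact @isOpen_empty Y tY
      · intro α β hne
        simp only [Function.onFun]
        by_cases hα : (φ ⁻¹' (Fam α)).Nonempty
        · by_cases hβ : (φ ⁻¹' (Fam β)).Nonempty
          · simp only [dif_pos hα, dif_pos hβ]
            have hne' : (⟨φ ⁻¹' (Fam α), ⟨α, rfl⟩⟩ : ↥S) ≠ ⟨φ ⁻¹' (Fam β), ⟨β, rfl⟩⟩ := by
              intro h
              have heq : φ ⁻¹' (Fam α) = φ ⁻¹' (Fam β) := congrArg Subtype.val h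
              obtain ⟨z, hz⟩ := hα
              exact Set.disjoint_left.mp ((hpw hne).preimage φ) hz (heq ▸ hz)
            exact hUd hne'
          · simp only [dif_neg hβ]; exact disjoint_empty _
        · simp only [dif_neg hα]; exact empty_disjoint _
      · intro α z hz
        have h : (φ ⁻¹' (Fam α)).Nonempty := ⟨z, hz⟩
        simp only [dif_pos h]
        exact hUs ⟨φ ⁻¹' (Fam α), ⟨α, rfl⟩⟩ hz
    exact key_sep tX tY DX DY φ hDX hDY hinj himg hdense hX hY Fam hUBX hUBY hsepX hsepY
end

section
/- Let X and Y be metrizable topological spaces, D_X ⊆ X and D_Y ⊆ Y closed discrete subsets, and φ : Y → X an injection such that φ[Y \ D_Y] = D_X and φ[Y] is dense in X. Then the space ⟨X, σ(τ_X, τ_Y, φ)⟩ is submetrizable, i.e., there exists a metrizable topology τ on the set X with τ ⊆ σ(τ_X, τ_Y, φ). -/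
open Set Topology

/-!
First choose compatible metrics in which `DX` and `DY` are `1`-separated: add to a compatible metric
the uniform distance between the families of tent functions centred at the points of the set. On
`X` then take the largest pseudometric lying below the metric of `X` and below the metric of `Y`
transported by `φ`: the infimum of the lengths of chains made of steps in `X` and of images under
`φ` of steps in `Y`. Its topology is coarser than `τ_X` and makes `φ` continuous, so it lies in
`σ(τ_X, τ_Y, φ)`.

It separates points because a chain of length `t < ε ≤ 1` can neither pass between two points of
`DX` nor between two points of `DY`. By induction along the chain, its endpoint lies within `t` of
the starting point `x`, or within `t` of a point `φ o`, `o ∉ DY`, that is reached by a single step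
in `Y` from a preimage of `x` or from a point of `DY` whose image is again such an endpoint. For
`ε` below the separation constants of `x` and of `x' ≠ x`, this excludes `x'`.
-/

open Filter Metric Function BoundedContinuousFunction

section SeparatingMetric

variable {α : Type*} [MetricSpace α] {S : Set α}

theorem exists_pos_le_dist_of_isClosed_of_isDiscrete (hS : IsClosed S) (hd : IsDiscrete S)
    (z : α) : ∃ δ > 0, ∀ a ∈ S, a ≠ z → δ ≤ dist z a := by
  obtain ⟨δ, hδ, hball⟩ := Metric.mem_nhdsWithin_iff.1 <|
    disjoint_principal_right.1 (isClosed_and_discrete_iff.1 ⟨hS, hd⟩ z)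
  refine ⟨δ, hδ, fun a ha haz => ?_⟩
  by_contra! h
  exact hball ⟨by rwa [mem_ball, dist_comm], haz⟩ ha

theorem exists_pos_le_dist_of_pairwise {c : ℝ} (hc : 0 < c)
    (hS : S.Pairwise fun a b => c ≤ dist a b) (z : α) :
    ∃ δ > 0, ∀ a ∈ S, a ≠ z → δ ≤ dist z a := by
  obtain ⟨δ, hδ, hball⟩ := Metric.isOpen_iff.1
    (isClosed_of_pairwise_le_dist hc (hS.mono (sdiff_subset (t := {z})))).isOpen_compl z
      fun h => h.2 rfl
  refine ⟨δ, hδ, fun a ha haz => ?_⟩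
  by_contra! h
  exact hball (by rwa [mem_ball, dist_comm]) ⟨ha, haz⟩

noncomputable def tent (c : α) (r : ℝ) (z : α) : ℝ := max 0 (1 - dist z c / r)

theorem tent_mem_Icc (c : α) {r : ℝ} (hr : 0 < r) (z : α) : tent c r z ∈ Icc (0 : ℝ) 1 :=
  ⟨le_max_left _ _, max_le zero_le_one (by simp only [sub_le_self_iff]; positivity)⟩

theorem tent_self (c : α) (r : ℝ) : tent c r c = 1 := by
  simp [tent]

theorem tent_eq_zero {c z : α} {r : ℝ} (hr : 0 < r) (h : r ≤ dist z c) : tent c r z = 0 :=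
  max_eq_left (by rw [sub_nonpos, one_le_div hr]; exact h)

theorem dist_tent_le (c : α) {r : ℝ} (hr : 0 < r) (z w : α) :
    dist (tent c r w) (tent c r z) ≤ dist w z / r := by
  calc dist (tent c r w) (tent c r z) ≤ |(1 - dist w c / r) - (1 - dist z c / r)| := by
        rw [Real.dist_eq, tent, tent, max_comm 0, max_comm 0]
        exact abs_max_sub_max_le_abs _ _ _
    _ = |dist w c - dist z c| / r := by
        rw [show (1 - dist w c / r) - (1 - dist z c / r) = (dist z c - dist w c) / r by ring,
          abs_div, abs_of_pos hr, abs_sub_comm]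
    _ ≤ dist w z / r := by gcongr; exact abs_dist_sub_le _ _ _

theorem exists_continuous_pairwise_one_le_dist (hS : IsClosed S) (hd : IsDiscrete S) :
    ∃ F : α → (S →ᵇ ℝ), Continuous F ∧ S.Pairwise fun a b => 1 ≤ dist (F a) (F b) := by
  have := hd.to_subtype
  choose ρ hρ hρS using exists_pos_le_dist_of_isClosed_of_isDiscrete hS hd
  let F (z : α) : S →ᵇ ℝ := .mkOfDiscrete (fun a => tent (a : α) (ρ a) z) 1 fun a b =>
    Real.dist_le_of_mem_Icc_01 (tent_mem_Icc _ (hρ a) z) (tent_mem_Icc _ (hρ b) z)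
  refine ⟨F, continuous_iff_continuousAt.2 fun z => ?_, fun a ha b hb hab => ?_⟩
  · have hz := hρ z
    refine continuousAt_of_locally_lipschitz (half_pos hz) (2 / ρ z) fun w hw => ?_
    refine (BoundedContinuousFunction.dist_le (by positivity)).2 fun a => ?_
    change dist (tent (a : α) (ρ a) w) (tent (a : α) (ρ a) z) ≤ _
    rcases le_or_gt (ρ z / 2) (ρ a) with h | h
    · calc _ ≤ dist w z / ρ a := dist_tent_le _ (hρ a) z w
        _ ≤ dist w z / (ρ z / 2) := by gcongr
        _ = 2 / ρ z * dist w z := by field_simp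
    · -- a tent narrower than `ρ z / 2` is centred at distance at least `ρ z` from `z`
      have haz : (a : α) ≠ z := by rintro rfl; linarith
      have hza := hρS z a a.2 haz
      have hwa : ρ a ≤ dist w a := by linarith [dist_triangle z w a, dist_comm z w]
      rw [tent_eq_zero (hρ a) hwa, tent_eq_zero (hρ a) (by linarith), dist_self]
      positivity
  · have hba : ρ a ≤ dist b a := dist_comm a b ▸ hρS a b hb hab.symm
    calc (1 : ℝ) = dist (F a ⟨a, ha⟩) (F b ⟨a, ha⟩) := by
          change 1 = dist (tent a (ρ a) a) (tent a (ρ a) b)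
          simp [tent_self, tent_eq_zero (hρ a) hba]
      _ ≤ dist (F a) (F b) := dist_coe_le_dist _

end SeparatingMetric

theorem TopologicalSpace.exists_metricSpace_pairwise_one_le_dist {α : Type*}
    [t : TopologicalSpace α] [MetrizableSpace α] {S : Set α} (hS : IsClosed S)
    (hd : IsDiscrete S) :
    ∃ m : MetricSpace α, m.toUniformSpace.toTopologicalSpace = t ∧
      S.Pairwise fun a b => 1 ≤ m.dist a b := by
  let := metrizableSpaceMetric α
  obtain ⟨F, hF, hsep⟩ := exists_continuous_pairwise_one_le_dist hS hd
  exact ⟨.induced (fun z => (z, F z)) (fun _ _ h => congrArg Prod.fst h) inferInstance,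
    (isEmbedding_graph hF).eq_induced.symm,
    fun a ha b hb hab => (hsep ha hb hab).trans (le_max_right _ _)⟩

theorem Function.Injective.exists_pos_le_dist_of_ne {X Y : Type*} [MetricSpace Y] {φ : Y → X}
    (hinj : Injective φ) {x x' : X} (hne : x ≠ x') :
    ∃ c > 0, ∀ q o, φ q = x → φ o = x' → c ≤ dist q o := by
  by_cases h : ∃ q o, φ q = x ∧ φ o = x'
  · obtain ⟨q, o, rfl, rfl⟩ := h
    refine ⟨dist q o, dist_pos.2 (ne_of_apply_ne φ hne), fun q' o' hq ho => ?_⟩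
    rw [hinj hq, hinj ho]
  · exact ⟨1, one_pos, fun q o hq ho => (h ⟨q, o, hq, ho⟩).elim⟩

theorem eventually_nhdsGT_zero_le {c : ℝ} (hc : 0 < c) : ∀ᶠ ε in 𝓝[>] (0 : ℝ), ε ≤ c :=
  mem_of_superset (Ioo_mem_nhdsGT hc) fun _ h => h.2.le

section Gluing

variable {X Y : Type*} [MetricSpace X] [MetricSpace Y] {φ : Y → X} {DY : Set Y}

variable (φ) in
inductive GlueChain (x : X) : X → ℝ → Prop
  | refl : GlueChain x x 0
  | stepX {z : X} {t : ℝ} (v : X) : GlueChain x z t → GlueChain x v (t + dist z v)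
  | stepY {t : ℝ} (q q' : Y) : GlueChain x (φ q) t → GlueChain x (φ q') (t + dist q q')

namespace GlueChain

theorem nonneg {x z : X} {t : ℝ} (h : GlueChain φ x z t) : 0 ≤ t := by
  induction h with
  | refl => exact le_rfl
  | stepX v _ ih => exact add_nonneg ih dist_nonneg
  | stepY q q' _ ih => exact add_nonneg ih dist_nonneg

theorem trans {x y z : X} {s t : ℝ} (h₁ : GlueChain φ x y s) (h₂ : GlueChain φ y z t) :
    GlueChain φ x z (s + t) := by
  induction h₂ with
  | refl => simpa using h₁
  | stepX v _ ih => simpa [add_assoc] using ih.stepX v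
  | stepY q q' _ ih => simpa [add_assoc] using ih.stepY q q'

theorem of_dist (u v : X) : GlueChain φ u v (dist u v) := by
  simpa using (refl : GlueChain φ u u 0).stepX v

theorem of_dist_apply (q q' : Y) : GlueChain φ (φ q) (φ q') (dist q q') := by
  simpa using (refl : GlueChain φ (φ q) (φ q) 0).stepY q q'

theorem symm {x z : X} {t : ℝ} (h : GlueChain φ x z t) : GlueChain φ z x t := by
  induction h with
  | refl => exact refl
  | @stepX z t v _ ih => simpa [add_comm, dist_comm] using (of_dist v z).trans ih
  | @stepY t q q' _ ih => simpa [add_comm, dist_comm] using (of_dist_apply q' q).trans ih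

end GlueChain

variable (φ) in
noncomputable def gluedDist (u v : X) : ℝ := sInf {t | GlueChain φ u v t}

theorem gluedDist_le_of_glueChain {u v : X} {t : ℝ} (h : GlueChain φ u v t) :
    gluedDist φ u v ≤ t :=
  csInf_le ⟨0, fun _ h => h.nonneg⟩ h

theorem le_gluedDist {u v : X} {c : ℝ} (h : ∀ t, GlueChain φ u v t → c ≤ t) :
    c ≤ gluedDist φ u v :=
  le_csInf ⟨_, GlueChain.of_dist u v⟩ h

theorem gluedDist_self (u : X) : gluedDist φ u u = 0 :=
  (gluedDist_le_of_glueChain .refl).antisymm (le_gluedDist fun _ h => h.nonneg)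

theorem gluedDist_comm (u v : X) : gluedDist φ u v = gluedDist φ v u := by
  simp only [gluedDist, fun t => (⟨.symm, .symm⟩ : GlueChain φ u v t ↔ GlueChain φ v u t)]

theorem gluedDist_triangle (u v w : X) : gluedDist φ u w ≤ gluedDist φ u v + gluedDist φ v w := by
  refine le_of_forall_pos_le_add fun ε hε => ?_
  obtain ⟨s, hs, hs'⟩ := exists_lt_of_csInf_lt ⟨_, GlueChain.of_dist u v⟩
    (lt_add_of_pos_right (gluedDist φ u v) (half_pos hε))
  obtain ⟨t, ht, ht'⟩ := exists_lt_of_csInf_lt ⟨_, GlueChain.of_dist v w⟩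
    (lt_add_of_pos_right (gluedDist φ v w) (half_pos hε))
  linarith [gluedDist_le_of_glueChain (hs.trans ht)]

theorem gluedDist_le_dist (u v : X) : gluedDist φ u v ≤ dist u v :=
  gluedDist_le_of_glueChain (.of_dist u v)

theorem gluedDist_apply_le_dist (q q' : Y) : gluedDist φ (φ q) (φ q') ≤ dist q q' :=
  gluedDist_le_of_glueChain (.of_dist_apply q q')

variable (φ DY) in
def SeparatedAt (ε : ℝ) (x : X) : Prop :=
  (∀ a ∈ φ '' DYᶜ, a ≠ x → ε ≤ dist x a) ∧ ∀ q, φ q = x → ∀ w ∈ DY, w ≠ q → ε ≤ dist q w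

theorem SeparatedAt.mono {ε δ : ℝ} {x : X} (h : SeparatedAt φ DY δ x) (hεδ : ε ≤ δ) :
    SeparatedAt φ DY ε x :=
  ⟨fun a ha hax => hεδ.trans (h.1 a ha hax), fun q hq w hw hwq => hεδ.trans (h.2 q hq w hw hwq)⟩

theorem exists_separatedAt (hinj : Injective φ) (hDY : DY.Pairwise fun w w' => 1 ≤ dist w w')
    (hφ : DYᶜ.Pairwise fun o o' => 1 ≤ dist (φ o) (φ o')) (x : X) :
    ∃ δ > 0, SeparatedAt φ DY δ x := by
  obtain ⟨δ, hδ, hsep⟩ := exists_pos_le_dist_of_pairwise one_pos hφ.image x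
  by_cases hx : x ∈ range φ
  · obtain ⟨q, rfl⟩ := hx
    obtain ⟨δ', hδ', hsep'⟩ := exists_pos_le_dist_of_pairwise one_pos hDY q
    refine ⟨min δ δ', lt_min hδ hδ', fun a ha hax => (min_le_left _ _).trans (hsep a ha hax),
      fun q' hq' w hw hwq' => ?_⟩
    obtain rfl := hinj hq'
    exact (min_le_right _ _).trans (hsep' w hw hwq')
  · exact ⟨δ, hδ, hsep, fun q hq => (hx ⟨q, hq⟩).elim⟩

/-- The invariant satisfied by the endpoints `z` of chains of length `t < ε` from `x`. The point `w`
is an anchor: a preimage of `x`, or a point of `DY` whose image is itself tethered. -/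
inductive Tethered (φ : Y → X) (DY : Set Y) (x : X) : X → ℝ → Prop
  | near {z : X} {t : ℝ} : dist x z ≤ t → Tethered φ DY x z t
  | via {w o : Y} {z : X} {t : ℝ} : (φ w = x ∨ w ∈ DY) → Tethered φ DY x (φ w) t → o ∉ DY →
      dist w o ≤ t → dist (φ o) z ≤ t → Tethered φ DY x z t

namespace Tethered

theorem mono {x z : X} {s t : ℝ} (h : Tethered φ DY x z s) (hst : s ≤ t) :
    Tethered φ DY x z t := by
  induction h generalizing t with
  | near h => exact near (h.trans hst)
  | via hw _ ho hwo hoz ih => exact via hw (ih hst) ho (hwo.trans hst) (hoz.trans hst)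

theorem stepX {x z : X} {t : ℝ} (h : Tethered φ DY x z t) (v : X) :
    Tethered φ DY x v (t + dist z v) := by
  have ht : t ≤ t + dist z v := le_add_of_nonneg_right dist_nonneg
  cases h with
  | near h => exact near ((dist_triangle x z v).trans (by linarith))
  | via hw hT ho hwo hoz =>
    exact via hw (hT.mono ht) ho (hwo.trans ht) ((dist_triangle _ z v).trans (by linarith))

theorem stepY (hDY : DY.Pairwise fun w w' => 1 ≤ dist w w')
    (hφ : DYᶜ.Pairwise fun o o' => 1 ≤ dist (φ o) (φ o')) {ε t : ℝ} {x : X} (hε : ε ≤ 1)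
    (hx : SeparatedAt φ DY ε x) (ht : 0 ≤ t) {q q' : Y} (hlt : t + dist q q' < ε)
    (h : Tethered φ DY x (φ q) t) : Tethered φ DY x (φ q') (t + dist q q') := by
  have hqq' : dist q q' ≤ t + dist q q' := le_add_of_nonneg_left ht
  have ht' : t ≤ t + dist q q' := le_add_of_nonneg_right dist_nonneg
  have hq'q' : dist (φ q') (φ q') ≤ t + dist q q' := by rw [dist_self]; linarith
  by_cases hq : q ∈ DY
  · by_cases hq' : q' ∈ DY
    · obtain rfl := hDY.eq hq hq' (by linarith)
      exact h.mono ht'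
    · exact via (Or.inr hq) (h.mono ht') hq' hqq' hq'q'
  · cases h with
    | near hxq =>
      have hqx : φ q = x := by
        by_contra hne
        linarith [hx.1 (φ q) ⟨q, hq, rfl⟩ hne]
      by_cases hq' : q' ∈ DY
      · linarith [hx.2 q hqx q' hq' (ne_of_mem_of_not_mem hq' hq)]
      · exact via (Or.inl hqx) (near (by rw [hqx, dist_self]; linarith)) hq' hqq' hq'q'
    | @via w o _ _ hw hT ho hwo hoq =>
      obtain rfl : o = q := hφ.eq ho hq (by linarith)
      have hwq' : dist w q' ≤ t + dist o q' := (dist_triangle w o q').trans (by linarith)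
      by_cases hq' : q' ∈ DY
      · by_cases hwD : w ∈ DY
        · obtain rfl := hDY.eq hwD hq' (by linarith)
          exact hT.mono ht'
        · linarith [hx.2 w (hw.resolve_right hwD) q' hq' (ne_of_mem_of_not_mem hq' hwD)]
      · exact via hw (hT.mono ht') hq' hwq' hq'q'

theorem le_of_separatedAt {ε t : ℝ} {x x' : X} (h : Tethered φ DY x x' t)
    (hxx' : ε ≤ dist x x') (hx' : SeparatedAt φ DY ε x')
    (hpre : ∀ q o, φ q = x → φ o = x' → ε ≤ dist q o) : ε ≤ t := by
  cases h with
  | near h => linarith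
  | @via w o _ _ hw _ ho hwo hox' =>
    by_contra! hlt
    have hox : φ o = x' := by
      by_contra hne
      linarith [hx'.1 _ ⟨o, ho, rfl⟩ hne, dist_comm (φ o) x']
    rcases hw with hwx | hwD
    · linarith [hpre w o hwx hox]
    · linarith [hx'.2 o hox w hwD (ne_of_mem_of_not_mem hwD ho), dist_comm o w]

end Tethered

theorem GlueChain.tethered (hDY : DY.Pairwise fun w w' => 1 ≤ dist w w')
    (hφ : DYᶜ.Pairwise fun o o' => 1 ≤ dist (φ o) (φ o')) {ε t : ℝ} {x z : X} (hε : ε ≤ 1)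
    (hx : SeparatedAt φ DY ε x) (h : GlueChain φ x z t) (ht : t < ε) : Tethered φ DY x z t := by
  induction h with
  | refl => exact .near (dist_self x).le
  | @stepX z _ v _ ih => exact (ih (by linarith [dist_nonneg (x := z) (y := v)])).stepX v
  | stepY q q' h ih =>
    exact (ih (by linarith [dist_nonneg (x := q) (y := q')])).stepY hDY hφ hε hx h.nonneg ht

theorem gluedDist_pos (hinj : Injective φ) (hDY : DY.Pairwise fun w w' => 1 ≤ dist w w')
    (hφ : DYᶜ.Pairwise fun o o' => 1 ≤ dist (φ o) (φ o')) {x x' : X} (hne : x ≠ x') :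
    0 < gluedDist φ x x' := by
  obtain ⟨δ, hδ, hx⟩ := exists_separatedAt hinj hDY hφ x
  obtain ⟨δ', hδ', hx'⟩ := exists_separatedAt hinj hDY hφ x'
  obtain ⟨c, hc, hpre⟩ := hinj.exists_pos_le_dist_of_ne hne
  obtain ⟨ε, hε, hε1, hεxx', hεδ, hεδ', hεc⟩ := (eventually_mem_nhdsWithin.and <|
    (eventually_nhdsGT_zero_le one_pos).and <| (eventually_nhdsGT_zero_le (dist_pos.2 hne)).and <|
    (eventually_nhdsGT_zero_le hδ).and <| (eventually_nhdsGT_zero_le hδ').and <|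
    eventually_nhdsGT_zero_le hc).exists
  refine lt_of_lt_of_le hε (le_gluedDist fun t ht => not_lt.1 fun hlt => ?_)
  exact (((ht.tethered hDY hφ hε1 (hx.mono hεδ) hlt).le_of_separatedAt hεxx' (hx'.mono hεδ')
    fun q o hq ho => hεc.trans (hpre q o hq ho)).trans_lt hlt).false

/-- A copy of `X`, so that it can carry the pseudometric `gluedDist φ` besides the metric of `X`. -/
def GluedSpace (_φ : Y → X) : Type _ := X

noncomputable instance : PseudoMetricSpace (GluedSpace φ) where
  dist := gluedDist (X := X) φ
  dist_self := gluedDist_self (X := X)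
  dist_comm := gluedDist_comm (X := X)
  dist_triangle := gluedDist_triangle (X := X)

variable (φ) in
def toGlued : X → GluedSpace φ := id

theorem lipschitzWith_toGlued : LipschitzWith 1 (toGlued φ) :=
  .of_dist_le_mul fun u v => by rw [NNReal.coe_one, one_mul]; exact gluedDist_le_dist (X := X) u v

theorem lipschitzWith_toGlued_comp : LipschitzWith 1 (toGlued φ ∘ φ) :=
  .of_dist_le_mul fun q q' => by
    rw [NNReal.coe_one, one_mul]; exact gluedDist_apply_le_dist (X := X) q q'

theorem t0Space_gluedSpace (hinj : Injective φ) (hDY : DY.Pairwise fun w w' => 1 ≤ dist w w')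
    (hφ : DYᶜ.Pairwise fun o o' => 1 ≤ dist (φ o) (φ o')) : T0Space (GluedSpace φ) :=
  ⟨fun _ _ h => by_contra fun hne =>
    (gluedDist_pos hinj hDY hφ hne).ne' (Metric.inseparable_iff.1 h)⟩

theorem exists_metrizable_le_continuous (hinj : Injective φ)
    (hDY : DY.Pairwise fun w w' => 1 ≤ dist w w')
    (hφ : DYᶜ.Pairwise fun o o' => 1 ≤ dist (φ o) (φ o')) :
    ∃ τ : TopologicalSpace X, @TopologicalSpace.MetrizableSpace X τ ∧
      UniformSpace.toTopologicalSpace ≤ τ ∧ Continuous[_, τ] φ := by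
  have := t0Space_gluedSpace hinj hDY hφ
  exact ⟨inferInstanceAs (TopologicalSpace (GluedSpace φ)),
    inferInstanceAs (TopologicalSpace.MetrizableSpace (GluedSpace φ)),
    continuous_id_iff_le.1 lipschitzWith_toGlued.continuous, lipschitzWith_toGlued_comp.continuous⟩

end Gluing

theorem statement8_general {X Y : Type*} (tX : TopologicalSpace X) (tY : TopologicalSpace Y)
    (DX : Set X) (DY : Set Y) (φ : Y → X)
    (hDX : ClosedDiscrete tX DX) (hDY : ClosedDiscrete tY DY)
    (hinj : Function.Injective φ)
    (himg : φ '' DYᶜ = DX)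
    (hmX : @TopologicalSpace.MetrizableSpace X tX)
    (hmY : @TopologicalSpace.MetrizableSpace Y tY) :
    ∃ τ : TopologicalSpace X, @TopologicalSpace.MetrizableSpace X τ ∧
      ∀ U : Set X, τ.IsOpen U → (sigmaTop tX tY φ).IsOpen U := by
  obtain ⟨mX, rfl, hsepX⟩ :=
    @TopologicalSpace.exists_metricSpace_pairwise_one_le_dist X tX hmX DX hDX.1 ⟨hDX.2⟩
  obtain ⟨mY, rfl, hsepY⟩ :=
    @TopologicalSpace.exists_metricSpace_pairwise_one_le_dist Y tY hmY DY hDY.1 ⟨hDY.2⟩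
  obtain ⟨τ, hτ, hXτ, hφ⟩ := exists_metrizable_le_continuous hinj hsepY
    (hinj.injOn.pairwise_image.1 (himg ▸ hsepX))
  exact ⟨τ, hτ, fun U hU => ⟨TopologicalSpace.le_def.1 hXτ U hU, hφ.isOpen_preimage U hU⟩⟩

theorem statement8 {X Y : Type*} (tX : TopologicalSpace X) (tY : TopologicalSpace Y)
    (DX : Set X) (DY : Set Y) (φ : Y → X)
    (hDX : ClosedDiscrete tX DX) (hDY : ClosedDiscrete tY DY)
    (hinj : Function.Injective φ)
    (himg : φ '' DYᶜ = DX)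
    (hdense : @Dense X tX (Set.range φ))
    (hmX : @TopologicalSpace.MetrizableSpace X tX)
    (hmY : @TopologicalSpace.MetrizableSpace Y tY) :
    ∃ τ : TopologicalSpace X, @TopologicalSpace.MetrizableSpace X τ ∧
      ∀ U : Set X, τ.IsOpen U → (sigmaTop tX tY φ).IsOpen U :=
  statement8_general tX tY DX DY φ hDX hDY hinj himg hmX hmY
end

section
/- Let X be a metrizable topological space and D_X ⊆ X a closed discrete subset. Then there exists a metric ρ on X that generates the topology of X and satisfies ρ(d₁, d₂) ≥ 1 for all distinct d₁, d₂ ∈ D_X. -/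
open Set Topology

open Metric BoundedContinuousFunction in
/-- Auxiliary construction: given a metric space, a closed set `D` with discrete subspace
topology, and a "separation radius" function `r` positive on `D` with
`4 * r d ≤ dist d d'` for distinct points of `D`, we can remetrize so that points of `D`
are `1`-separated. -/
theorem aux_remetrize {X : Type*} [m : MetricSpace X] {D : Set X} (hne : D.Nonempty)
    (hc : IsClosed D) (hdisc : DiscreteTopology D) (r : X → ℝ)
    (hr0 : ∀ d ∈ D, 0 < r d)
    (hr4 : ∀ d ∈ D, ∀ d' ∈ D, d ≠ d' → 4 * r d ≤ dist d d') :
    ∃ m' : MetricSpace X,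
      m'.toUniformSpace.toTopologicalSpace = m.toUniformSpace.toTopologicalSpace ∧
      ∀ d₁ ∈ D, ∀ d₂ ∈ D, d₁ ≠ d₂ → 1 ≤ @dist X m'.toPseudoMetricSpace.toDist d₁ d₂ := by
  classical
  have hr0' : ∀ d : D, 0 < r (d : X) := fun d => hr0 d d.2
  -- the bump functions
  set f : X → D → ℝ := fun x d => max 0 (1 - dist x (d : X) / r (d : X)) with hf
  have f_nonneg : ∀ x d, 0 ≤ f x d := fun x d => le_max_left _ _
  have f_le_one : ∀ x d, f x d ≤ 1 := by
    intro x d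
    apply max_le zero_le_one
    have : 0 ≤ dist x (d : X) / r (d : X) := div_nonneg dist_nonneg (hr0' d).le
    linarith
  -- Lipschitz estimate
  have flip : ∀ (x y : X) (d : D), dist (f x d) (f y d) ≤ dist x y / r (d : X) := by
    intro x y d
    rw [Real.dist_eq]
    have h1 : |max 0 (1 - dist x (d : X) / r (d : X)) - max 0 (1 - dist y (d : X) / r (d : X))|
        ≤ |(1 - dist x (d : X) / r (d : X)) - (1 - dist y (d : X) / r (d : X))| := by
      simpa [max_comm] using
        abs_max_sub_max_le_abs (1 - dist x (d : X) / r (d : X))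
          (1 - dist y (d : X) / r (d : X)) 0
    have h2 : (1 - dist x (d : X) / r (d : X)) - (1 - dist y (d : X) / r (d : X))
        = (dist y (d : X) - dist x (d : X)) / r (d : X) := by ring
    calc |f x d - f y d| ≤ |(1 - dist x (d : X) / r (d : X)) - (1 - dist y (d : X) / r (d : X))| :=
          h1
      _ = |dist y (d : X) - dist x (d : X)| / r (d : X) := by
          rw [h2, abs_div, abs_of_pos (hr0' d)]
      _ ≤ dist x y / r (d : X) := by
          have habs : |dist y (d : X) - dist x (d : X)| ≤ dist x y := by
            rw [abs_sub_comm]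
            exact abs_dist_sub_le x y (d : X)
          exact div_le_div_of_nonneg_right habs (hr0' d).le
  have fzero : ∀ (x : X) (d : D), r (d : X) ≤ dist x (d : X) → f x d = 0 := by
    intro x d h
    apply max_eq_left
    have h1 : (1 : ℝ) ≤ dist x (d : X) / r (d : X) := (one_le_div (hr0' d)).2 h
    linarith
  have fpos : ∀ (x : X) (d : D), f x d ≠ 0 → dist x (d : X) < r (d : X) := by
    intro x d h
    by_contra hcon
    exact h (fzero x d (not_lt.1 hcon))
  have fone : ∀ d : D, f (d : X) d = 1 := by
    intro d
    simp only [hf, dist_self, zero_div, sub_zero]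
    exact max_eq_right zero_le_one
  -- the map into bounded functions on D
  set F : X → (D →ᵇ ℝ) := fun x =>
    ⟨⟨fun d => f x d, continuous_of_discreteTopology⟩, 2, by
      intro a b
      rw [Real.dist_eq, abs_le]
      constructor <;> nlinarith [f_nonneg x a, f_nonneg x b, f_le_one x a, f_le_one x b]⟩
    with hF
  have hFapply : ∀ (x : X) (d : D), F x d = f x d := fun _ _ => rfl
  -- continuity of F
  have hFcont : Continuous F := by
    rw [Metric.continuous_iff]
    intro x0 ε hε
    have hε2 : 0 < ε / 2 := half_pos hε
    by_cases hx0 : x0 ∈ D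
    · -- near a point of D, only the bump at x0 matters
      have hrx0 : 0 < r x0 := hr0 x0 hx0
      refine ⟨min (r x0) (ε / 2 * r x0), lt_min hrx0 (by positivity), fun x hx => ?_⟩
      have hbound : ∀ d : D, dist (F x d) (F x0 d) ≤ ε / 2 := by
        intro d
        by_cases hdx : (d : X) = x0
        · -- the bump at x0 itself: Lipschitz bound
          have h1 : dist (f x d) (f x0 d) ≤ dist x x0 / r (d : X) := flip x x0 d
          have h2 : dist x x0 / r (d : X) ≤ ε / 2 := by
            rw [hdx]
            rw [div_le_iff₀ hrx0]
            have := lt_of_lt_of_le hx (min_le_right _ _)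
            linarith
          simpa [hFapply] using h1.trans h2
        · -- other bumps vanish near x0
          have hdD : (d : X) ∈ D := d.2
          have h4d : 4 * r (d : X) ≤ dist (d : X) x0 := hr4 _ hdD _ hx0 hdx
          have h4x0 : 4 * r x0 ≤ dist x0 (d : X) := hr4 _ hx0 _ hdD (fun h => hdx h.symm)
          have hx0d : f x0 d = 0 := by
            apply fzero
            have := hr0' d
            rw [dist_comm] at h4d
            linarith
          have hxd : f x d = 0 := by
            by_contra hcon
            have hlt : dist x (d : X) < r (d : X) := fpos x d hcon
            have hxx0 : dist x x0 < r x0 := lt_of_lt_of_le hx (min_le_left _ _)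
            have htri : dist x0 (d : X) ≤ dist x x0 + dist x (d : X) := by
              rw [dist_comm x x0]
              exact dist_triangle _ _ _
            have h4d' : 4 * r (d : X) ≤ dist x0 (d : X) := by rwa [dist_comm] at h4d
            linarith [hr0' d, hrx0]
          rw [hFapply, hFapply, hxd, hx0d]
          simpa using hε2.le
      have : dist (F x) (F x0) ≤ ε / 2 := (BoundedContinuousFunction.dist_le hε2.le).2 hbound
      linarith
    · -- away from D : all relevant bumps have radius ≥ s0/2
      have hs0 : 0 < infDist x0 D := (hc.notMem_iff_infDist_pos hne).1 hx0
      set s0 := infDist x0 D with hs0def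
      refine ⟨min (s0 / 2) (ε / 2 * (s0 / 2)), lt_min (by positivity) (by positivity),
        fun x hx => ?_⟩
      have hx1 : dist x x0 < s0 / 2 := lt_of_lt_of_le hx (min_le_left _ _)
      have hx2 : dist x x0 < ε / 2 * (s0 / 2) := lt_of_lt_of_le hx (min_le_right _ _)
      have hbound : ∀ d : D, dist (F x d) (F x0 d) ≤ ε / 2 := by
        intro d
        have hdD : (d : X) ∈ D := d.2
        have hinf : s0 ≤ dist x0 (d : X) := infDist_le_dist_of_mem hdD
        by_cases hz : f x d = 0 ∧ f x0 d = 0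
        · rw [hFapply, hFapply, hz.1, hz.2]
          simpa using hε2.le
        · -- some bump value nonzero : then r d ≥ s0/2
          have hrd : s0 / 2 ≤ r (d : X) := by
            rcases not_and_or.1 hz with h | h
            · have hlt : dist x (d : X) < r (d : X) := fpos x d h
              have : dist x0 (d : X) ≤ dist x0 x + dist x (d : X) := dist_triangle _ _ _
              rw [dist_comm x0 x] at this
              linarith
            · have hlt : dist x0 (d : X) < r (d : X) := fpos x0 d h
              linarith
          have h1 : dist (f x d) (f x0 d) ≤ dist x x0 / r (d : X) := flip x x0 d
          have h2 : dist x x0 / r (d : X) ≤ ε / 2 := by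
            rw [div_le_iff₀ (lt_of_lt_of_le (by positivity) hrd)]
            nlinarith
          simpa [hFapply] using h1.trans h2
      have : dist (F x) (F x0) ≤ ε / 2 := (BoundedContinuousFunction.dist_le hε2.le).2 hbound
      linarith
  -- the embedding into X × (D →ᵇ ℝ)
  set G : X → X × (D →ᵇ ℝ) := fun x => (x, F x) with hG
  have hGcont : Continuous G := continuous_id.prodMk hFcont
  have hGemb : Topology.IsEmbedding G := by
    refine ⟨Topology.IsInducing.of_comp hGcont continuous_fst ?_, fun a b h => congrArg Prod.fst h⟩
    exact Topology.IsInducing.id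
  refine ⟨hGemb.comapMetricSpace G, rfl, ?_⟩
  intro d₁ h₁ d₂ h₂ hne'
  have hd : @dist X (hGemb.comapMetricSpace G).toPseudoMetricSpace.toDist d₁ d₂
      = dist (G d₁) (G d₂) := rfl
  rw [hd, Prod.dist_eq]
  have hF1 : f d₁ ⟨d₁, h₁⟩ = 1 := fone ⟨d₁, h₁⟩
  have hF2 : f d₂ ⟨d₁, h₁⟩ = 0 := by
    apply fzero
    have h4 : 4 * r d₁ ≤ dist d₁ d₂ := hr4 _ h₁ _ h₂ hne'
    have := hr0 d₁ h₁
    rw [dist_comm]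
    linarith
  have h1 : (1 : ℝ) ≤ dist (F d₁ ⟨d₁, h₁⟩) (F d₂ ⟨d₁, h₁⟩) := by
    rw [hFapply, hFapply, hF1, hF2, Real.dist_eq]
    simp
  have h2 : dist (F d₁ ⟨d₁, h₁⟩) (F d₂ ⟨d₁, h₁⟩) ≤ dist (F d₁) (F d₂) :=
    BoundedContinuousFunction.dist_coe_le_dist _
  calc (1 : ℝ) ≤ dist (F d₁) (F d₂) := h1.trans h2
    _ ≤ max (dist ((G d₁).1) ((G d₂).1)) (dist ((G d₁).2) ((G d₂).2)) := le_max_right _ _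

theorem statement9 {X : Type*} (tX : TopologicalSpace X)
    (hmX : @TopologicalSpace.MetrizableSpace X tX)
    (D : Set X) (hD : ClosedDiscrete tX D) :
    ∃ m : MetricSpace X, m.toUniformSpace.toTopologicalSpace = tX ∧
      ∀ d₁ ∈ D, ∀ d₂ ∈ D, d₁ ≠ d₂ → 1 ≤ @dist X m.toPseudoMetricSpace.toDist d₁ d₂ := by
  classical
  obtain ⟨hcl, hdisc⟩ := hD
  letI := tX
  letI := hmX
  letI m0 : MetricSpace X := TopologicalSpace.metrizableSpaceMetric X
  have htop : m0.toUniformSpace.toTopologicalSpace = tX := rfl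
  rcases D.eq_empty_or_nonempty with rfl | hne
  · exact ⟨m0, htop, by simp⟩
  -- separation radii from discreteness
  have key : ∀ d ∈ D, ∃ ε > 0, ∀ y ∈ D, y ≠ d → ε ≤ dist d y := by
    intro d hd
    haveI : DiscreteTopology D := hdisc
    have ho : IsOpen ({⟨d, hd⟩} : Set D) := isOpen_discrete _
    obtain ⟨U, hU, hUeq⟩ := isOpen_induced_iff.mp ho
    have hdU : d ∈ U := by
      have : (⟨d, hd⟩ : D) ∈ (Subtype.val ⁻¹' U : Set D) := by
        rw [hUeq]; exact rfl
      exact this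
    obtain ⟨ε, hε, hball⟩ := Metric.isOpen_iff.mp hU d hdU
    refine ⟨ε, hε, fun y hy hyd => ?_⟩
    by_contra hcon
    push_neg at hcon
    have hyU : y ∈ U := hball (by simpa [Metric.mem_ball, dist_comm] using hcon)
    have : (⟨y, hy⟩ : D) ∈ (Subtype.val ⁻¹' U : Set D) := hyU
    rw [hUeq] at this
    exact hyd (by simpa using this)
  set r : X → ℝ := fun x =>
    if h : (D \ {x}).Nonempty then min 1 (Metric.infDist x (D \ {x})) / 4 else 1 / 4 with hr
  have hr0 : ∀ d ∈ D, 0 < r d := by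
    intro d hd
    simp only [hr]
    split
    · next h =>
      obtain ⟨ε, hε, hkey⟩ := key d hd
      have hinf : ε ≤ Metric.infDist d (D \ {d}) := by
        by_contra hlt
        push_neg at hlt
        obtain ⟨y, hy, hlt'⟩ := (Metric.infDist_lt_iff h).1 hlt
        exact absurd hlt' (not_lt.2 (hkey y hy.1 (by simpa using hy.2)))
      have : 0 < min 1 (Metric.infDist d (D \ {d})) := lt_min one_pos (lt_of_lt_of_le hε hinf)
      linarith
    · norm_num
  have hr4 : ∀ d ∈ D, ∀ d' ∈ D, d ≠ d' → 4 * r d ≤ dist d d' := by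
    intro d hd d' hd' hne'
    have hmem : d' ∈ D \ {d} := ⟨hd', by simpa using hne'.symm⟩
    have hrd : r d = min 1 (Metric.infDist d (D \ {d})) / 4 := by
      simp only [hr]
      exact dif_pos (⟨d', hmem⟩ : (D \ {d}).Nonempty)
    rw [hrd]
    have h1 : Metric.infDist d (D \ {d}) ≤ dist d d' := Metric.infDist_le_dist_of_mem hmem
    have h2 : min 1 (Metric.infDist d (D \ {d})) ≤ Metric.infDist d (D \ {d}) :=
      min_le_right _ _
    linarith
  obtain ⟨m', hm't, hm'sep⟩ := aux_remetrize hne hcl hdisc r hr0 hr4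
  exact ⟨m', hm't.trans htop, hm'sep⟩
end

section
/- Every T1 connected first-countable topological space Z is a continuous open image of a connected metrizable space: there exist a connected metrizable topological space M and a surjective map g : M → Z that is continuous and open. -/
/-!
The spines of a hedgehog indexed by the open sets of `Z` are the segments `[0, e_U]` in
`ℓ^∞(Opens Z, ℝ)`; the hedgehog `H_z` at `z` is the union of the spines with `z ∈ U`. The space
`M` consists of the sequences `x ∈ ∏ₙ H_z` such that for every neighbourhood `N` of `z`,
infinitely many coordinates are tips `x n = e_U` with `U ⊆ N`; in a T1 space this determines
`z =: g x`.
A coordinate within distance `1` of a tip `e_U` has positive `U`-entry, which forces `g x ∈ U`: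
this gives continuity. Keeping finitely many coordinates and replacing the others by the tips of
a countable neighbourhood base at any point `w` of the spines still in use gives openness.
Each fibre is preconnected, being stable under finite modifications inside the connected product
`∏ₙ H_z`, and an open continuous surjection with connected fibres onto a connected space has
connected domain.
-/

open Set Topology TopologicalSpace

universe u

open Filter
open scoped lp ENNReal

section FiniteModification

variable {ι : Type*} {α : ι → Type*} [∀ i, TopologicalSpace (α i)]

theorem isPreconnected_of_forall_eventuallyEq {H : ∀ i, Set (α i)}
    (hH : ∀ i, IsPreconnected (H i)) {S : Set (∀ i, α i)} (hSH : S ⊆ univ.pi H)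
    (hS : ∀ x ∈ S, ∀ y ∈ univ.pi H, (∀ᶠ i in cofinite, y i = x i) → y ∈ S) : IsPreconnected S := by
  classical
  rcases S.eq_empty_or_nonempty with rfl | ⟨x₀, hx₀⟩
  · exact isPreconnected_empty
  set D := ⋃ I : Finset ι, (I.piecewise · x₀) '' univ.pi H
  have hD : IsPreconnected D := by
    refine isPreconnected_iUnion
      ⟨x₀, mem_iInter.2 fun I => ⟨x₀, hSH hx₀, I.piecewise_same _⟩⟩ fun I => ?_
    refine (isPreconnected_univ_pi hH).image _ (Continuous.continuousOn ?_)
    exact continuous_pi fun i => by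
      by_cases hi : i ∈ I
      · simpa [Finset.piecewise_eq_of_mem _ _ _ hi] using continuous_apply i
      · simpa [Finset.piecewise_eq_of_notMem _ _ _ hi] using continuous_const
  have hDS : D ⊆ S := by
    rintro _ ⟨_, ⟨I, rfl⟩, y, hy, rfl⟩
    exact hS x₀ hx₀ _ (I.piecewise_mem_set_pi hy (hSH hx₀)) <|
      I.eventually_cofinite_notMem.mono fun i hi => I.piecewise_eq_of_notMem _ _ hi
  refine hD.subset_closure hDS fun y hy => mem_closure_iff_nhds.2 fun t ht => ?_
  obtain ⟨I, hI⟩ := exists_finset_piecewise_mem_of_mem_nhds ht x₀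
  exact ⟨_, hI, mem_iUnion.2 ⟨I, y, hSH hy, rfl⟩⟩

end FiniteModification

namespace Hedgehog

variable {Z : Type u} [TopologicalSpace Z]

open scoped Classical in
noncomputable def tip (U : Opens Z) : ℓ^∞(Opens Z, ℝ) := lp.single ∞ U 1

theorem tip_apply_self (U : Opens Z) : tip U U = 1 := by
  classical exact lp.single_apply_self _ _ _

theorem tip_apply_of_ne {U V : Opens Z} (h : V ≠ U) : tip U V = 0 := by
  classical exact lp.single_apply_ne _ _ _ h

theorem pos_apply_of_dist_tip_lt_one {f : ℓ^∞(Opens Z, ℝ)} {U : Opens Z}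
    (h : dist f (tip U) < 1) : 0 < f U := by
  have := (lp.norm_apply_le_norm ENNReal.top_ne_zero (f - tip U) U).trans_lt
    (by rwa [← dist_eq_norm])
  rw [lp.coeFn_sub, Pi.sub_apply, tip_apply_self, Real.norm_eq_abs, abs_sub_lt_iff] at this
  linarith

def hedgehog (z : Z) : Set ℓ^∞(Opens Z, ℝ) :=
  ⋃ (U : Opens Z) (_ : z ∈ U), segment ℝ 0 (tip U)

theorem tip_mem_hedgehog {z : Z} {U : Opens Z} (hz : z ∈ U) : tip U ∈ hedgehog z :=
  mem_iUnion₂.2 ⟨U, hz, right_mem_segment _ _ _⟩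

theorem isPreconnected_hedgehog (z : Z) : IsPreconnected (hedgehog z) := by
  refine isPreconnected_of_forall 0 fun f hf => ?_
  obtain ⟨U, hU, hf⟩ := mem_iUnion₂.1 hf
  exact ⟨segment ℝ 0 (tip U), fun g hg => mem_iUnion₂.2 ⟨U, hU, hg⟩,
    left_mem_segment _ _ _, hf, (convex_segment _ _).isPreconnected⟩

theorem mem_of_mem_hedgehog_of_pos {z : Z} {f : ℓ^∞(Opens Z, ℝ)} {U : Opens Z}
    (hf : f ∈ hedgehog z) (hU : 0 < f U) : z ∈ U := by
  obtain ⟨V, hV, a, b, -, -, -, rfl⟩ := mem_iUnion₂.1 hf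
  obtain rfl | hUV := eq_or_ne U V
  · exact hV
  · simp [tip_apply_of_ne hUV] at hU

theorem isOpen_setOf_mem_hedgehog (f : ℓ^∞(Opens Z, ℝ)) : IsOpen {z : Z | f ∈ hedgehog z} := by
  have : {z : Z | f ∈ hedgehog z} =
      ⋃ (U : Opens Z) (_ : f ∈ segment ℝ 0 (tip U)), (U : Set Z) := by
    ext z
    simp only [hedgehog, mem_ofPred_eq, mem_iUnion, exists_prop, SetLike.mem_coe, and_comm]
  rw [this]
  exact isOpen_biUnion fun U _ => U.isOpen

def FrequentlyTipsNear (z : Z) (x : ℕ → ℓ^∞(Opens Z, ℝ)) : Prop :=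
  ∀ N ∈ 𝓝 z, ∃ᶠ n in atTop, ∃ U : Opens Z, x n = tip U ∧ (U : Set Z) ⊆ N

theorem FrequentlyTipsNear.congr {z : Z} {x y : ℕ → ℓ^∞(Opens Z, ℝ)}
    (hx : FrequentlyTipsNear z x) (hxy : ∀ᶠ n in atTop, x n = y n) : FrequentlyTipsNear z y :=
  fun N hN => (hx N hN).mp (hxy.mono fun _ hn => hn ▸ id)

def fiber (z : Z) : Set (ℕ → ℓ^∞(Opens Z, ℝ)) :=
  {x | (∀ n, x n ∈ hedgehog z) ∧ FrequentlyTipsNear z x}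

theorem eq_of_mem_fiber [T1Space Z] {x : ℕ → ℓ^∞(Opens Z, ℝ)} {z z' : Z} (hz : x ∈ fiber z)
    (hz' : x ∈ fiber z') : z = z' := by
  by_contra hne
  obtain ⟨n, U, hxn, hU⟩ := (hz.2 _ (isOpen_compl_singleton.mem_nhds hne)).exists
  have hpos : 0 < x n U := by rw [hxn, tip_apply_self]; exact one_pos
  exact hU (mem_of_mem_hedgehog_of_pos (hz'.1 n) hpos) rfl

theorem exists_mem_fiber_eqOn [FirstCountableTopology Z] (z : Z) (x : ℕ → ℓ^∞(Opens Z, ℝ))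
    (I : Finset ℕ) (hx : ∀ n ∈ I, x n ∈ hedgehog z) : ∃ y ∈ fiber z, ∀ n ∈ I, y n = x n := by
  obtain ⟨s, hs⟩ := (𝓝 z).exists_antitone_basis
  let U (n : ℕ) : Opens Z := ⟨interior (s n), isOpen_interior⟩
  have hzU (n : ℕ) : z ∈ U n := mem_interior_iff_mem_nhds.2 (hs.mem n)
  have hU : FrequentlyTipsNear z (fun n => tip (U n)) := fun N hN =>
    (hs.eventually_subset hN).frequently.mono fun n hn => ⟨U n, rfl, interior_subset.trans hn⟩
  classical
  refine ⟨I.piecewise x (fun n => tip (U n)), ⟨fun n => ?_, hU.congr ?_⟩,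
    fun n hn => I.piecewise_eq_of_mem _ _ hn⟩
  · by_cases hn : n ∈ I
    · rw [I.piecewise_eq_of_mem _ _ hn]; exact hx n hn
    · rw [I.piecewise_eq_of_notMem _ _ hn]; exact tip_mem_hedgehog (hzU n)
  · rw [← Nat.cofinite_eq_atTop]
    exact I.eventually_cofinite_notMem.mono fun n hn =>
      (I.piecewise_eq_of_notMem x (fun n => tip (U n)) hn).symm

theorem isPreconnected_fiber (z : Z) : IsPreconnected (fiber z) := by
  refine isPreconnected_of_forall_eventuallyEq (fun _ => isPreconnected_hedgehog z)
    (fun _ hx n _ => hx.1 n) fun x hx y hy hyx => ⟨fun n => hy n trivial, hx.2.congr ?_⟩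
  rw [← Nat.cofinite_eq_atTop]
  exact hyx.mono fun _ => Eq.symm

variable (Z) in
def seqSpace : Set (ℕ → ℓ^∞(Opens Z, ℝ)) := ⋃ z : Z, fiber z

noncomputable def proj (x : seqSpace Z) : Z := (mem_iUnion.1 x.2).choose

theorem mem_fiber_proj (x : seqSpace Z) : x.1 ∈ fiber (proj x) := (mem_iUnion.1 x.2).choose_spec

theorem proj_eq [T1Space Z] {x : seqSpace Z} {z : Z} (h : x.1 ∈ fiber z) : proj x = z :=
  eq_of_mem_fiber (mem_fiber_proj x) h

theorem surjective_proj [T1Space Z] [FirstCountableTopology Z] :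
    Function.Surjective (proj (Z := Z)) := fun z => by
  obtain ⟨y, hy, -⟩ := exists_mem_fiber_eqOn z 0 ∅ (by simp)
  exact ⟨⟨y, mem_iUnion.2 ⟨z, hy⟩⟩, proj_eq hy⟩

theorem continuous_proj : Continuous (proj (Z := Z)) := by
  refine continuous_iff_continuousAt.2 fun x N hN => ?_
  obtain ⟨n, U, hxn, hUN⟩ := ((mem_fiber_proj x).2 N hN).exists
  have hcont : Continuous fun y : seqSpace Z => y.1 n :=
    (continuous_apply n).comp continuous_subtype_val
  have hnear : ∀ᶠ y : seqSpace Z in 𝓝 x, dist (y.1 n) (x.1 n) < 1 :=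
    hcont.continuousAt.eventually (Metric.ball_mem_nhds _ one_pos)
  rw [hxn] at hnear
  exact hnear.mono fun y hy =>
    hUN (mem_of_mem_hedgehog_of_pos ((mem_fiber_proj y).1 n) (pos_apply_of_dist_tip_lt_one hy))

theorem isOpenMap_proj [T1Space Z] [FirstCountableTopology Z] : IsOpenMap (proj (Z := Z)) := by
  intro O hO
  rw [isOpen_iff_forall_mem_open]
  rintro _ ⟨x, hxO, rfl⟩
  obtain ⟨V, hV, rfl⟩ := isOpen_induced_iff.1 hO
  obtain ⟨I, u, hu, hIu⟩ := isOpen_pi_iff.1 hV x.1 hxO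
  refine ⟨⋂ n ∈ I, {w | x.1 n ∈ hedgehog w}, fun w hw => ?_,
    isOpen_biInter_finset fun n _ => isOpen_setOf_mem_hedgehog _,
    mem_iInter₂.2 fun n _ => (mem_fiber_proj x).1 n⟩
  obtain ⟨y, hy, hyx⟩ := exists_mem_fiber_eqOn w x.1 I fun n hn => mem_iInter₂.1 hw n hn
  exact ⟨⟨y, mem_iUnion.2 ⟨w, hy⟩⟩,
    hIu fun n hn => show y n ∈ u n from (hyx n hn).symm ▸ (hu n hn).2, proj_eq hy⟩

theorem image_val_preimage_proj [T1Space Z] (z : Z) :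
    Subtype.val '' (proj ⁻¹' {z}) = fiber z := by
  ext x
  constructor
  · rintro ⟨x, rfl, rfl⟩
    exact mem_fiber_proj x
  · exact fun hx => ⟨⟨x, mem_iUnion.2 ⟨z, hx⟩⟩, proj_eq hx, rfl⟩

theorem connectedSpace [T1Space Z] [FirstCountableTopology Z] [ConnectedSpace Z] :
    ConnectedSpace (seqSpace Z) := by
  have hfiber (z : Z) : IsConnected (proj ⁻¹' {z}) :=
    ⟨(surjective_proj z).imp fun _ => id, by
      rw [← IsInducing.subtypeVal.isPreconnected_image, image_val_preimage_proj]
      exact isPreconnected_fiber z⟩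
  have hquot : IsQuotientMap (proj (Z := Z)) :=
    isOpenMap_proj.isQuotientMap continuous_proj surjective_proj
  exact connectedSpace_iff_univ.2 <|
    hquot.isCoinducing.isConnected_preimage_of_isClosed hfiber isClosed_univ isConnected_univ

end Hedgehog

theorem statement10 {Z : Type u} [TopologicalSpace Z] [T1Space Z] [ConnectedSpace Z]
    [FirstCountableTopology Z] :
    ∃ (M : Type u) (tM : TopologicalSpace M),
      @TopologicalSpace.MetrizableSpace M tM ∧ @ConnectedSpace M tM ∧
        ∃ g : M → Z, Function.Surjective g ∧
          @Continuous M Z tM _ g ∧ @IsOpenMap M Z tM _ g :=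
  ⟨Hedgehog.seqSpace Z, inferInstance, inferInstance, Hedgehog.connectedSpace, Hedgehog.proj,
    Hedgehog.surjective_proj, Hedgehog.continuous_proj, Hedgehog.isOpenMap_proj⟩
end

section
/- Let Z be a T1 topological space. Then Z is connected and first-countable if and only if there exist a connected metrizable topological space M and a surjective map g : M → Z that is continuous and open. -/
/-!
The reverse implication is easy: a continuous open surjection `g` satisfies
`𝓝 (g m) = map g (𝓝 m)`, so it transports first countability, and it transports connectedness.

For the forward one, let `H` be the hedgehog with one spine `(0, ∞)` for every open set of `Z`.
A sequence `p : ℕ → H` codes `z` if every spine it meets contains `z` and spines inside any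
neighbourhood of `z` are met infinitely often. First countability gives every point a code, and
in a T1 space a code determines its point. Decoding is continuous on the subspace `M` of codes
of the metrizable space `ℕ → H`, since a code close to `p` meets the same spines as `p` at a
fixed coordinate. It is open, since a neighbourhood of `p` only constrains finitely many
coordinates, which can be kept or moved to the center while the tail is replaced by a code of a
nearby point. Its fibers are connected: finitely many coordinates can be slid to the center
along their spines and back out, and every code of `z` is a limit of finite modifications of any
other. A quotient map with connected fibers onto a connected space has a connected domain.
-/

open Set Topology TopologicalSpace Filter

universe u

lemma mem_connectedComponentIn_of_mem_closure {X : Type*} [TopologicalSpace X] {F : Set X}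
    {x y : X} (hy : y ∈ F) (hcl : y ∈ closure (connectedComponentIn F x)) :
    y ∈ connectedComponentIn F x := by
  by_cases hx : x ∈ F
  · exact (isPreconnected_connectedComponentIn.subset_closure (subset_insert _ _)
      (insert_subset hcl subset_closure)).subset_connectedComponentIn
      (mem_insert_of_mem _ (mem_connectedComponentIn hx))
      (insert_subset hy (connectedComponentIn_subset _ _)) (mem_insert _ _)
  · rw [connectedComponentIn_eq_empty hx, closure_empty] at hcl
    exact hcl.elim

lemma Topology.IsCoinducing.connectedSpace {X Y : Type*} [TopologicalSpace X] [TopologicalSpace Y]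
    [ConnectedSpace Y] {f : X → Y} (hf : IsCoinducing f)
    (hfib : ∀ y, IsConnected (f ⁻¹' {y})) : ConnectedSpace X :=
  connectedSpace_iff_univ.2 <| by
    simpa using hf.isConnected_preimage_of_isClosed hfib isClosed_univ isConnected_univ

lemma IsOpenQuotientMap.firstCountableTopology {X Y : Type*} [TopologicalSpace X]
    [TopologicalSpace Y] [FirstCountableTopology X] {f : X → Y} (hf : IsOpenQuotientMap f) :
    FirstCountableTopology Y :=
  ⟨hf.surjective.forall.2 fun x => hf.map_nhds_eq x ▸ inferInstance⟩

inductive Hedgehog (S : Type u) : Type u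
  | center : Hedgehog S
  | point (u : S) (t : ℝ) (ht : 0 < t) : Hedgehog S

namespace Hedgehog

variable {S : Type u}

def spine : Hedgehog S → Option S
  | center => none
  | point u _ _ => some u

def height : Hedgehog S → ℝ
  | center => 0
  | point _ t _ => t

@[simp] lemma spine_center : spine (center : Hedgehog S) = none := rfl
@[simp] lemma spine_point (u : S) (t : ℝ) (ht : 0 < t) : spine (point u t ht) = some u := rfl
@[simp] lemma height_center : height (center : Hedgehog S) = 0 := rfl
@[simp] lemma height_point (u : S) (t : ℝ) (ht : 0 < t) : height (point u t ht) = t := rfl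

lemma height_nonneg : ∀ x : Hedgehog S, 0 ≤ height x
  | center => le_rfl
  | point _ _ ht => ht.le

lemma height_pos : ∀ {x : Hedgehog S}, x ≠ center → 0 < height x
  | center, h => absurd rfl h
  | point _ _ ht, _ => ht

lemma ext :
    ∀ {x y : Hedgehog S}, spine x = spine y → height x = height y → x = y
  | center, center, _, _ => rfl
  | point u t _, point v s _, hs, hh => by
    obtain rfl : u = v := Option.some.inj hs
    obtain rfl : t = s := hh
    rfl

open scoped Classical in
noncomputable instance : Dist (Hedgehog S) where
  dist x y := if spine x = spine y then |height x - height y| else height x + height y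

lemma dist_of_spine_eq {x y : Hedgehog S} (h : spine x = spine y) :
    dist x y = |height x - height y| := if_pos h

lemma dist_of_spine_ne {x y : Hedgehog S} (h : spine x ≠ spine y) :
    dist x y = height x + height y := if_neg h

lemma abs_height_sub_height_le_dist (x y : Hedgehog S) : |height x - height y| ≤ dist x y := by
  by_cases h : spine x = spine y
  · exact (dist_of_spine_eq h).ge
  · rw [dist_of_spine_ne h, abs_sub_le_iff]
    constructor <;> linarith [height_nonneg x, height_nonneg y]

noncomputable instance : MetricSpace (Hedgehog S) where
  dist_self x := by simp [dist_of_spine_eq]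
  dist_comm x y := by
    by_cases h : spine x = spine y
    · rw [dist_of_spine_eq h, dist_of_spine_eq h.symm, abs_sub_comm]
    · rw [dist_of_spine_ne h, dist_of_spine_ne (Ne.symm h), add_comm]
  dist_triangle x y z := by
    have hxy := abs_height_sub_height_le_dist x y
    have hyz := abs_height_sub_height_le_dist y z
    by_cases hxz : spine x = spine z
    · rw [dist_of_spine_eq hxz]
      exact (abs_sub_le _ _ _).trans (add_le_add hxy hyz)
    rw [dist_of_spine_ne hxz]
    by_cases h : spine x = spine y
    · rw [dist_of_spine_ne (h ▸ hxz : spine y ≠ spine z)]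
      linarith [le_abs_self (height x - height y)]
    · rw [dist_of_spine_ne h]
      linarith [neg_abs_le (height y - height z)]
  eq_of_dist_eq_zero {x y} hd := by
    by_cases h : spine x = spine y
    · rw [dist_of_spine_eq h, abs_eq_zero, sub_eq_zero] at hd
      exact ext h hd
    · rw [dist_of_spine_ne h] at hd
      have hx : x = center := by
        by_contra hx
        linarith [height_pos hx, height_nonneg y]
      have hy : y = center := by
        by_contra hy
        linarith [height_pos hy, height_nonneg x]
      exact absurd (by rw [hx, hy]) h

lemma eventually_spine_eq {x : Hedgehog S} (hx : x ≠ center) :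
    ∀ᶠ y in 𝓝 x, spine y = spine x := by
  filter_upwards [Metric.ball_mem_nhds x (height_pos hx)] with y hy
  by_contra h
  rw [Metric.mem_ball, dist_of_spine_ne h] at hy
  linarith [height_nonneg y]

noncomputable def shrink (c : ℝ) : Hedgehog S → Hedgehog S
  | center => center
  | point u t ht => if hc : 0 < c then point u (c * t) (mul_pos hc ht) else center

@[simp] lemma shrink_one (x : Hedgehog S) : shrink 1 x = x := by
  cases x <;> simp [shrink]

@[simp] lemma shrink_zero (x : Hedgehog S) : shrink 0 x = center := by
  cases x <;> simp [shrink]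

lemma spine_shrink (c : ℝ) (x : Hedgehog S) :
    spine (shrink c x) = if 0 < c then spine x else none := by
  cases x with
  | center => simp [shrink]
  | point u t ht => by_cases hc : 0 < c <;> simp [shrink, hc]

lemma dist_shrink_shrink_le (c d : ℝ) (x : Hedgehog S) :
    dist (shrink c x) (shrink d x) ≤ |c - d| * height x := by
  cases x with
  | center => simp [shrink]
  | point u t ht =>
    by_cases hc : 0 < c <;> by_cases hd : 0 < d <;>
      simp only [shrink, hc, hd, dite_true, dite_false]
    · rw [dist_of_spine_eq (by simp)]
      simp only [height_point]
      rw [← sub_mul, abs_mul, abs_of_pos ht]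
    · rw [dist_of_spine_ne (by simp)]
      simp only [height_point, height_center, add_zero]
      nlinarith [le_abs_self (c - d)]
    · rw [dist_of_spine_ne (by simp)]
      simp only [height_point, height_center, zero_add]
      nlinarith [neg_abs_le (c - d)]
    · rw [dist_self, height_point]
      positivity

lemma continuous_shrink_left (x : Hedgehog S) : Continuous fun c : ℝ => shrink c x :=
  (LipschitzWith.of_dist_le_mul (K := ⟨height x, height_nonneg x⟩) fun c d =>
    (dist_shrink_shrink_le c d x).trans_eq (by rw [Real.dist_eq, mul_comm]; rfl)).continuous

variable {Z : Type u} [TopologicalSpace Z]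

def spineSet (x : Hedgehog (Opens Z)) : Set Z := Option.elim (spine x) univ (↑)

@[simp] lemma spineSet_center : spineSet (center : Hedgehog (Opens Z)) = univ := rfl
@[simp] lemma spineSet_point (U : Opens Z) (t : ℝ) (ht : 0 < t) :
    spineSet (point U t ht) = U := rfl

lemma isOpen_spineSet (x : Hedgehog (Opens Z)) : IsOpen (spineSet x) := by
  cases x with
  | center => exact isOpen_univ
  | point U _ _ => exact U.isOpen

lemma eventually_spineSet_subset (x : Hedgehog (Opens Z)) :
    ∀ᶠ y in 𝓝 x, spineSet y ⊆ spineSet x := by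
  by_cases hx : x = center
  · subst hx
    exact Eventually.of_forall fun _ => subset_univ _
  · filter_upwards [eventually_spine_eq hx] with y hy
    rw [spineSet, spineSet, hy]

lemma spineSet_subset_spineSet_shrink (c : ℝ) (x : Hedgehog (Opens Z)) :
    spineSet x ⊆ spineSet (shrink c x) := by
  by_cases hc : 0 < c
  · rw [spineSet, spineSet, spine_shrink, if_pos hc]
  · rw [spineSet, spineSet, spine_shrink, if_neg hc]
    exact subset_univ _

end Hedgehog

open Hedgehog

section IsCodeOf

variable {Z : Type u} [TopologicalSpace Z]

def IsCodeOf (p : ℕ → Hedgehog (Opens Z)) (z : Z) : Prop :=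
  (∀ n, z ∈ spineSet (p n)) ∧ ∀ W ∈ 𝓝 z, ∃ᶠ n in atTop, spineSet (p n) ⊆ W

lemma IsCodeOf.congr {p q : ℕ → Hedgehog (Opens Z)} {z : Z} (hp : IsCodeOf p z)
    (hq : ∀ n, z ∈ spineSet (q n)) (hpq : q =ᶠ[atTop] p) : IsCodeOf q z :=
  ⟨hq, fun W hW => (hp.2 W hW).mp (hpq.mono fun _ h h' => h ▸ h')⟩

lemma IsCodeOf.eq [T1Space Z] {p : ℕ → Hedgehog (Opens Z)} {z z' : Z} (h : IsCodeOf p z)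
    (h' : IsCodeOf p z') : z = z' := by
  by_contra hne
  obtain ⟨n, hn⟩ := (h.2 _ (compl_singleton_mem_nhds hne)).exists
  exact hn (h'.1 n) rfl

lemma exists_isCodeOf [FirstCountableTopology Z] (z : Z) : ∃ p, IsCodeOf p z := by
  obtain ⟨B, hB⟩ := (𝓝 z).exists_antitone_basis
  refine ⟨fun n => point ⟨interior (B n), isOpen_interior⟩ 1 one_pos, fun n => ?_,
    fun W hW => ?_⟩
  · exact mem_interior_iff_mem_nhds.2 (hB.mem n)
  · exact ((hB.tendsto_smallSets.eventually (eventually_smallSets_subset.2 hW)).mono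
      fun n hn => interior_subset.trans hn).frequently

lemma IsCodeOf.eventually_mem {p : ℕ → Hedgehog (Opens Z)} {z : Z} (hp : IsCodeOf p z)
    {W : Set Z} (hW : W ∈ 𝓝 z) : ∀ᶠ q in 𝓝 p, ∀ z', IsCodeOf q z' → z' ∈ W := by
  obtain ⟨n, hn⟩ := (hp.2 W hW).exists
  filter_upwards [(continuous_apply n).continuousAt.eventually (eventually_spineSet_subset (p n))]
    with q hq z' hz'
  exact hn (hq (hz'.1 n))

lemma IsCodeOf.eventually_exists_mem [FirstCountableTopology Z] {p : ℕ → Hedgehog (Opens Z)}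
    {z : Z} (hp : IsCodeOf p z) {O : Set (ℕ → Hedgehog (Opens Z))} (hO : O ∈ 𝓝 p) :
    ∀ᶠ z' in 𝓝 z, ∃ q ∈ O, IsCodeOf q z' := by
  classical
  rw [nhds_pi, Filter.mem_pi] at hO
  obtain ⟨I, hI, t, ht, hIt⟩ := hO
  have hV : ∀ᶠ z' in 𝓝 z, ∀ i ∈ I, Hedgehog.center ∈ t i ∨ z' ∈ spineSet (p i) :=
    (eventually_all_finite hI).2 fun i _ =>
      mem_of_superset ((isOpen_spineSet _).mem_nhds (hp.1 i)) fun _ => Or.inr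
  filter_upwards [hV] with z' hz'
  obtain ⟨e, he⟩ := exists_isCodeOf z'
  -- on the constrained coordinates, `q` keeps `p` unless the center is allowed
  let q : ℕ → Hedgehog (Opens Z) := fun i =>
    if i ∈ I then (if Hedgehog.center ∈ t i then Hedgehog.center else p i) else e i
  refine ⟨q, hIt fun i hi => ?_, he.congr (fun i => ?_) ?_⟩
  · simp only [q, if_pos hi]
    split_ifs with h
    exacts [h, mem_of_mem_nhds (ht i)]
  · by_cases hi : i ∈ I
    · simp only [q, if_pos hi]
      split_ifs with h
      exacts [mem_univ _, (hz' i hi).resolve_left h]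
    · simpa only [q, if_neg hi] using he.1 i
  · exact (Nat.cofinite_eq_atTop ▸ hI.eventually_cofinite_notMem).mono fun i hi => if_neg hi

lemma IsCodeOf.mem_connectedComponentIn_truncate {p r : ℕ → Hedgehog (Opens Z)} {z : Z}
    (hp : IsCodeOf p z) (hr : ∀ n, z ∈ spineSet (r n)) {K : ℕ}
    (hrp : ∀ n, K ≤ n → r n = p n) :
    r ∈ connectedComponentIn {q | IsCodeOf q z}
      (fun n => if n < K then Hedgehog.center else p n) := by
  let γ : ℝ → ℕ → Hedgehog (Opens Z) := fun c n => if n < K then shrink c (r n) else p n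
  have hγ : Continuous γ := continuous_pi fun n => by
    by_cases hn : n < K
    · simpa only [γ, if_pos hn] using continuous_shrink_left (r n)
    · simpa only [γ, if_neg hn] using continuous_const
  have hγ_code : γ '' Icc 0 1 ⊆ {q | IsCodeOf q z} := by
    rintro _ ⟨c, -, rfl⟩
    refine hp.congr (fun n => ?_) (eventually_ge_atTop K |>.mono fun n hn => if_neg hn.not_gt)
    by_cases hn : n < K
    · simpa only [γ, if_pos hn] using spineSet_subset_spineSet_shrink c _ (hr n)
    · simpa only [γ, if_neg hn] using hp.1 n
  have hγ0 : γ 0 = fun n => if n < K then Hedgehog.center else p n := by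
    simp only [γ, shrink_zero]
  have hγ1 : γ 1 = r := funext fun n => by
    by_cases hn : n < K
    · simp only [γ, if_pos hn, shrink_one]
    · simp only [γ, if_neg hn, hrp n (not_lt.1 hn)]
  exact (isPreconnected_Icc.image γ hγ.continuousOn).subset_connectedComponentIn
    ⟨0, ⟨le_rfl, zero_le_one⟩, hγ0⟩ hγ_code ⟨1, ⟨zero_le_one, le_rfl⟩, hγ1⟩

lemma IsCodeOf.mem_connectedComponentIn {p q : ℕ → Hedgehog (Opens Z)} {z : Z}
    (hp : IsCodeOf p z) (hq : IsCodeOf q z) {K : ℕ} (hqp : ∀ n, K ≤ n → q n = p n) :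
    q ∈ connectedComponentIn {r | IsCodeOf r z} p := by
  rw [← connectedComponentIn_eq (hp.mem_connectedComponentIn_truncate hp.1 fun _ _ => rfl)]
  exact hp.mem_connectedComponentIn_truncate hq.1 hqp

lemma isPreconnected_setOf_isCodeOf (z : Z) : IsPreconnected {p | IsCodeOf p z} := by
  refine isPreconnected_of_forall_pair fun p hp q hq =>
    ⟨_, connectedComponentIn_subset _ _, mem_connectedComponentIn hp, ?_,
      isPreconnected_connectedComponentIn⟩
  -- each `x K` is a finite modification of `p`, and `x K → q`
  let x : ℕ → ℕ → Hedgehog (Opens Z) := fun K n => if n < K then q n else p n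
  have hx : ∀ K, x K ∈ connectedComponentIn {r | IsCodeOf r z} p := fun K => by
    refine IsCodeOf.mem_connectedComponentIn (K := K) hp (hp.congr (fun n => ?_) ?_)
      fun n hn => if_neg hn.not_gt
    · by_cases hn : n < K
      · simpa only [x, if_pos hn] using hq.1 n
      · simpa only [x, if_neg hn] using hp.1 n
    · exact (eventually_ge_atTop K).mono fun n hn => if_neg hn.not_gt
  have hxq : Tendsto x atTop (𝓝 q) := tendsto_pi_nhds.2 fun n =>
    tendsto_atTop_of_eventually_const (i₀ := n + 1) fun K hK => if_pos hK
  exact mem_connectedComponentIn_of_mem_closure hq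
    (mem_closure_of_tendsto hxq (Eventually.of_forall hx))

abbrev Codes (Z : Type u) [TopologicalSpace Z] : Type u :=
  {p : ℕ → Hedgehog (Opens Z) | ∃ z, IsCodeOf p z}

namespace Codes

noncomputable def decode (p : Codes Z) : Z := Exists.choose p.2

lemma isCodeOf_decode (p : Codes Z) : IsCodeOf p.1 (decode p) := Exists.choose_spec p.2

lemma decode_eq [T1Space Z] {p : Codes Z} {z : Z} (h : IsCodeOf p.1 z) : decode p = z :=
  (isCodeOf_decode p).eq h

variable [T1Space Z] [FirstCountableTopology Z]

lemma isOpenQuotientMap_decode : IsOpenQuotientMap (decode : Codes Z → Z) where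
  surjective z := (exists_isCodeOf z).elim fun p hp => ⟨⟨p, z, hp⟩, decode_eq hp⟩
  continuous := continuous_iff_continuousAt.2 fun p W hW =>
    (continuous_subtype_val.continuousAt.eventually
      ((isCodeOf_decode p).eventually_mem hW)).mono fun q hq => hq _ (isCodeOf_decode q)
  isOpenMap := IsOpenMap.of_nhds_le fun p S hS => by
    obtain ⟨O, hO, hOS⟩ := (mem_nhds_subtype _ _ _).1 (mem_map.1 hS)
    filter_upwards [(isCodeOf_decode p).eventually_exists_mem hO] with z ⟨q, hqO, hq⟩
    exact decode_eq (p := ⟨q, z, hq⟩) hq ▸ hOS hqO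

lemma isConnected_decode_preimage (z : Z) : IsConnected (decode ⁻¹' {z} : Set (Codes Z)) := by
  refine ⟨isOpenQuotientMap_decode.surjective.nonempty_preimage.2 (singleton_nonempty z), ?_⟩
  rw [← Topology.IsInducing.subtypeVal.isPreconnected_image]
  convert isPreconnected_setOf_isCodeOf z
  ext p
  exact ⟨fun ⟨q, hq, hqp⟩ => hqp ▸ hq ▸ isCodeOf_decode q,
    fun hp => ⟨⟨p, z, hp⟩, decode_eq hp, rfl⟩⟩

end Codes

end IsCodeOf

theorem statement11 {Z : Type u} [TopologicalSpace Z] [T1Space Z] :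
    (ConnectedSpace Z ∧ FirstCountableTopology Z) ↔
      ∃ (M : Type u) (tM : TopologicalSpace M),
        @TopologicalSpace.MetrizableSpace M tM ∧ @ConnectedSpace M tM ∧
          ∃ g : M → Z, Function.Surjective g ∧
            @Continuous M Z tM _ g ∧ @IsOpenMap M Z tM _ g := by
  constructor
  · rintro ⟨_, _⟩
    have hg : IsOpenQuotientMap (Codes.decode : Codes Z → Z) := Codes.isOpenQuotientMap_decode
    exact ⟨Codes Z, _, inferInstance,
      hg.isQuotientMap.isCoinducing.connectedSpace Codes.isConnected_decode_preimage,
      Codes.decode, hg.surjective, hg.continuous, hg.isOpenMap⟩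
  · rintro ⟨M, tM, _, _, g, hsurj, hcont, hopen⟩
    exact ⟨hsurj.connectedSpace hcont,
      IsOpenQuotientMap.firstCountableTopology ⟨hsurj, hcont, hopen⟩⟩
end

section
/- Let X and Y be topological spaces, φ : Y → X a function, Z a connected topological space, g : X → Z a continuous open surjection, and Q a dense subset of Z such that g⁻¹[Q] ⊆ φ[Y] and for every q ∈ Q the set φ⁻¹[g⁻¹(q)] is a connected subset of Y. Then the space ⟨X, σ(τ_X, τ_Y, φ)⟩ is connected. -/
open Set Topology

theorem statement12 {X Y Z : Type*} (tX : TopologicalSpace X) (tY : TopologicalSpace Y)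
    (tZ : TopologicalSpace Z) (φ : Y → X) (g : X → Z)
    (hZconn : @ConnectedSpace Z tZ)
    (hgc : @Continuous X Z tX tZ g) (hgo : @IsOpenMap X Z tX tZ g)
    (hgs : Function.Surjective g)
    (Q : Set Z) (hQdense : @Dense Z tZ Q)
    (hsub : g ⁻¹' Q ⊆ Set.range φ)
    (hconn : ∀ q ∈ Q, @IsConnected Y tY (φ ⁻¹' (g ⁻¹' {q}))) :
    @ConnectedSpace X (sigmaTop tX tY φ) := by
  have hne : Nonempty X := by
    obtain ⟨z⟩ := hZconn.toNonempty
    obtain ⟨x, -⟩ := hgs z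
    exact ⟨x⟩
  refine @ConnectedSpace.mk X (sigmaTop tX tY φ) (@PreconnectedSpace.mk X (sigmaTop tX tY φ) ?_) hne
  rintro u v hu hv hcov ⟨a, -, ha⟩ ⟨b, -, hb⟩
  have hu' : tX.IsOpen u ∧ tY.IsOpen (φ ⁻¹' u) := hu
  have hv' : tX.IsOpen v ∧ tY.IsOpen (φ ⁻¹' v) := hv
  -- images are open in Z and cover Z
  have hgu : tZ.IsOpen (g '' u) := hgo u hu'.1
  have hgv : tZ.IsOpen (g '' v) := hgo v hv'.1
  have hcovZ : (Set.univ : Set Z) ⊆ g '' u ∪ g '' v := by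
    intro z _
    obtain ⟨x, rfl⟩ := hgs z
    rcases hcov (Set.mem_univ x) with h | h
    · exact Or.inl ⟨x, h, rfl⟩
    · exact Or.inr ⟨x, h, rfl⟩
  have hZpre := hZconn.toPreconnectedSpace.isPreconnected_univ
  obtain ⟨z, -, hz⟩ := hZpre (g '' u) (g '' v) hgu hgv hcovZ
    ⟨g a, Set.mem_univ _, ⟨a, ha, rfl⟩⟩ ⟨g b, Set.mem_univ _, ⟨b, hb, rfl⟩⟩
  -- the open set g''u ∩ g''v meets the dense set Q
  obtain ⟨q, hqW, hqQ⟩ := hQdense.inter_open_nonempty (g '' u ∩ g '' v)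
    (tZ.isOpen_inter _ _ hgu hgv) ⟨z, hz⟩
  obtain ⟨⟨x₁, hx₁u, hx₁⟩, ⟨x₂, hx₂v, hx₂⟩⟩ := hqW
  -- lift x₁, x₂ to Y
  obtain ⟨y₁, hy₁⟩ := hsub (show x₁ ∈ g ⁻¹' Q by simp [hx₁, hqQ])
  obtain ⟨y₂, hy₂⟩ := hsub (show x₂ ∈ g ⁻¹' Q by simp [hx₂, hqQ])
  have hC := (hconn q hqQ).isPreconnected
  have hsubC : φ ⁻¹' (g ⁻¹' {q}) ⊆ φ ⁻¹' u ∪ φ ⁻¹' v := fun y _ =>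
    hcov (Set.mem_univ (φ y))
  obtain ⟨w, -, hwu, hwv⟩ := hC (φ ⁻¹' u) (φ ⁻¹' v) hu'.2 hv'.2 hsubC
    ⟨y₁, by simp [Set.mem_preimage, hy₁, hx₁], by simp [Set.mem_preimage, hy₁, hx₁u]⟩
    ⟨y₂, by simp [Set.mem_preimage, hy₂, hx₂], by simp [Set.mem_preimage, hy₂, hx₂v]⟩
  exact ⟨φ w, Set.mem_univ _, hwu, hwv⟩
end
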